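/- arXiv:math/9304211 — 9 statements merged into one kernel-verified Lean document; each statement's English description precedes it below -/
import Mathlib

section
/- Let q ≥ 1 and let a_1, ..., a_n be residues mod q with gcd(a_i, q) = 1 for all i. Let P ⊆ Z/qZ with |P| = k. Then the number of the 2^n subsets I ⊆ [n] with (∑_{i∈I} a_i mod q) ∈ P is at most ∑_{j : (n-k)/2 ≤ j < (n+k)/2} C(n,j)_q, where C(n,s)_q := ∑_{j ≡ s (mod q)} C(n,j) denotes the mod-q binomial coefficient. -/
/-- The mod-q binomial coefficient `C(n,s)_q = ∑_{0 ≤ j ≤ n, j ≡ s (mod q)} C(n,j)`. -/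
def modBinom (n q : ℕ) (s : ℤ) : ℕ :=
  ∑ j ∈ Finset.range (n + 1), if ((j : ℤ) - s) % (q : ℤ) = 0 then n.choose j else 0

/-- The sum of the `k` middle mod-`q` binomial coefficients,
`_{(n-k)/2 ≤ j < (n+k)/2} C(n,j)_q` (the integers `j` in question all lie in `[-q, n+q]`
when `k ≤ q`). -/
noncomputable def middleSum (n q k : ℕ) : ℕ :=
  ∑ j ∈ Finset.Icc (-(q : ℤ)) ((n : ℤ) + q),
    if (n : ℤ) - k ≤ 2 * j ∧ 2 * j < (n : ℤ) + k then modBinom n q j else 0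

/-!
Induct on the index set. Adding an element `x` splits the subsets counted for `P` into those
counted for `P` and for the translate `P - a x` over the smaller index set. Since `a x` generates
`ZMod q`, the translate differs from `P` unless `P` is empty or everything, so `P ∪ (P - a x)` has
more than `k` elements and the fibre counts over `P` and `P - a x` regroup into fibre counts over
sets of sizes `k + 1` and `k - 1`. The middle sums obey the matching recurrence
`M(n + 1, k) = M(n, k + 1) + M(n, k - 1)`, and for `P = ZMod q` the count is `2 ^ n ≤ M(n, q)`.
-/

open Finset

lemma Finset.exists_card_eq_and_sum_add_sum_eq {α M : Type*} [DecidableEq α] [AddCommMonoid M]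
    (f : α → M) (s t : Finset α) {m : ℕ} (hlo : #(s ∩ t) ≤ m) (hhi : m ≤ #(s ∪ t)) :
    ∃ A B : Finset α, #A = m ∧ #A + #B = #s + #t ∧
      ∑ x ∈ s, f x + ∑ x ∈ t, f x = ∑ x ∈ A, f x + ∑ x ∈ B, f x := by
  obtain ⟨A, hiA, hAu, rfl⟩ :=
    exists_subsuperset_card_eq (inter_subset_left.trans subset_union_left) hlo hhi
  have hdisj : Disjoint (s ∩ t) ((s ∪ t) \ A) := disjoint_sdiff.mono_left hiA
  refine ⟨A, (s ∩ t) ∪ ((s ∪ t) \ A), rfl, ?_, ?_⟩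
  · rw [card_union_of_disjoint hdisj, card_sdiff_of_subset hAu,
      ← card_union_add_card_inter s t]
    have := card_le_card hAu
    omega
  · rw [sum_union hdisj, ← sum_union_inter, ← sum_sdiff hAu]
    abel

lemma Finset.card_filter_mem_eq_sum_card_fiberwise {ι M : Type*} [DecidableEq M] (f : ι → M)
    (s : Finset ι) (t : Finset M) : #{x ∈ s | f x ∈ t} = ∑ b ∈ t, #{x ∈ s | f x = b} := by
  rw [card_eq_sum_card_fiberwise (s := {x ∈ s | f x ∈ t}) fun x hx => (mem_filter.1 hx).2]
  refine sum_congr rfl fun b hb => ?_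
  rw [filter_filter]
  exact congrArg card (filter_congr fun x _ => ⟨And.right, fun h => ⟨h ▸ hb, h⟩⟩)

lemma ZMod.image_sub_ne_self_of_isUnit {q : ℕ} [NeZero q] {c : ZMod q} (hc : IsUnit c)
    {P : Finset (ZMod q)} (hP₀ : P.Nonempty) (hP : P ≠ univ) : P.image (· - c) ≠ P := by
  intro hfix
  have hclosed (m : ℕ) : ∀ p ∈ P, p - m * c ∈ P := by
    induction m with
    | zero => simp
    | succ m ih =>
      intro p hp
      have := hfix ▸ mem_image_of_mem (· - c) (ih p hp)
      simpa [add_mul, sub_sub] using this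
  obtain ⟨p, hp⟩ := hP₀
  refine hP (eq_univ_of_forall fun y => ?_)
  have := hclosed ((p - y) * c⁻¹).val p hp
  rwa [ZMod.natCast_zmod_val, mul_assoc, mul_comm c⁻¹, ZMod.mul_inv_of_unit c hc, mul_one,
    sub_sub_cancel] at this

lemma modBinom_eq_sum_range {n N : ℕ} (hN : n < N) (q : ℕ) (s : ℤ) :
    modBinom n q s = ∑ j ∈ range N, if ((j : ℤ) - s) % q = 0 then n.choose j else 0 := by
  refine sum_subset (range_subset_range.2 hN) fun j _ hj => ?_
  simp [Nat.choose_eq_zero_of_lt (show n < j by simpa using hj)]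

lemma modBinom_succ (n q : ℕ) (s : ℤ) :
    modBinom (n + 1) q s = modBinom n q s + modBinom n q (s - 1) := by
  have hshift (j : ℕ) : ((j + 1 : ℕ) : ℤ) - s = j - (s - 1) := by push_cast; ring
  rw [modBinom, sum_range_succ', modBinom_eq_sum_range (show n < n + 1 + 1 by omega),
    sum_range_succ' _ (n + 1), modBinom]
  simp only [Nat.choose_succ_succ', ite_add_zero, sum_add_distrib, hshift, Nat.choose_zero_right]
  ring

lemma middleSum_eq_sum_filter {n q k : ℕ} (hk : k ≤ 2 * q) {R : Finset ℤ}
    (hR : Icc (-(q : ℤ)) (n + q) ⊆ R) :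
    middleSum n q k = ∑ j ∈ R with (n : ℤ) - k ≤ 2 * j ∧ 2 * j < n + k, modBinom n q j := by
  rw [middleSum, ← sum_filter]
  refine sum_subset (filter_subset_filter _ hR) fun j hj hj' => absurd ?_ hj'
  simp only [mem_filter, mem_Icc] at hj ⊢
  omega

lemma middleSum_succ {n q k : ℕ} (hk₀ : 1 ≤ k) (hk : k < 2 * q) :
    middleSum (n + 1) q k = middleSum n q (k + 1) + middleSum n q (k - 1) := by
  set R := Icc (-(q : ℤ) - 1) (n + q + 1)
  have hR {m : ℕ} (hm : m ≤ n + 1) : Icc (-(q : ℤ)) (m + q) ⊆ R :=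
    Icc_subset_Icc (by omega) (by omega)
  have hshift : ∑ j ∈ R with (n : ℤ) + 1 - k ≤ 2 * j ∧ 2 * j < n + 1 + k, modBinom n q (j - 1)
      = ∑ j ∈ R with (n : ℤ) - 1 - k ≤ 2 * j ∧ 2 * j < n - 1 + k, modBinom n q j := by
    refine sum_nbij' (· - 1) (· + 1) ?_ ?_ (by simp) (by simp) (by simp) <;>
      · intro j hj
        simp only [R, mem_filter, mem_Icc] at hj ⊢
        omega
  rw [middleSum_eq_sum_filter (by omega) (hR le_rfl),
    middleSum_eq_sum_filter (by omega) (hR n.le_succ),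
    middleSum_eq_sum_filter (by omega) (hR n.le_succ)]
  simp only [modBinom_succ, sum_add_distrib, Nat.cast_succ, hshift]
  -- the windows of width `k` about `n ± 1` together cover those of widths `k ± 1` about `n`
  simp only [sum_filter, ← sum_add_distrib]
  refine sum_congr rfl fun j _ => ?_
  rw [Nat.cast_sub hk₀]
  split_ifs <;> omega

lemma one_le_middleSum_zero {q k : ℕ} (hk : 1 ≤ k) : 1 ≤ middleSum 0 q k := by
  have h0 : (0 : ℤ) ∈ Icc (-(q : ℤ)) ((0 : ℕ) + q) := by simp
  refine le_of_eq_of_le ?_ (single_le_sum (fun j _ => Nat.zero_le _) h0)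
  simp [modBinom]
  omega

lemma two_pow_le_middleSum_self {m q : ℕ} (hq : 1 ≤ q) : 2 ^ m ≤ middleSum m q q := by
  rw [middleSum_eq_sum_filter (by omega) subset_rfl, ← Nat.sum_range_choose]
  simp only [modBinom]
  refine (sum_le_sum fun t ht => ?_).trans_eq sum_comm
  -- the window contains `q` consecutive integers, one of them congruent to `t`
  obtain ⟨d, r, hdr, hr₀, hr⟩ : ∃ d r : ℤ, 2 * (q * d) + r = 2 * t - m + q ∧ 0 ≤ r ∧ r < 2 * q :=
    ⟨_, _, by rw [← mul_assoc]; exact Int.mul_ediv_add_emod _ _, Int.emod_nonneg _ (by omega),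
      Int.emod_lt_of_pos _ (by omega)⟩
  have hj : (t : ℤ) - q * d ∈
      {j ∈ Icc (-(q : ℤ)) (m + q) | (m : ℤ) - q ≤ 2 * j ∧ 2 * j < m + q} := by
    have := mem_range.1 ht
    simp only [mem_filter, mem_Icc]
    omega
  refine le_of_eq_of_le ?_ (single_le_sum (fun j _ => Nat.zero_le _) hj)
  simp

lemma card_filter_powerset_insert_sum_mem {α G : Type*} [DecidableEq α] [AddCommGroup G]
    [DecidableEq G] (a : α → G) {x : α} {S : Finset α} (hx : x ∉ S) (P : Finset G) :
    #{I ∈ (insert x S).powerset | ∑ i ∈ I, a i ∈ P}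
      = #{I ∈ S.powerset | ∑ i ∈ I, a i ∈ P}
        + #{I ∈ S.powerset | ∑ i ∈ I, a i ∈ P.image (· - a x)} := by
  simp only [card_filter, sum_powerset_insert hx]
  congr 1
  refine sum_congr rfl fun I hI => ?_
  rw [sum_insert fun hxI => hx (mem_powerset.1 hI hxI)]
  simp [sub_eq_iff_eq_add, add_comm]

section SubsetSumsModQ

variable {α : Type*} [DecidableEq α] {q : ℕ} [NeZero q] (a : α → ZMod q)

lemma card_filter_powerset_insert_sum_mem_le {x : α} {S : Finset α} (hx : x ∉ S)
    (hax : IsUnit (a x))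
    (ih : ∀ P : Finset (ZMod q), #{I ∈ S.powerset | ∑ i ∈ I, a i ∈ P} ≤ middleSum #S q #P)
    {P : Finset (ZMod q)} (hP₀ : P.Nonempty) (hP : P ≠ univ) :
    #{I ∈ (insert x S).powerset | ∑ i ∈ I, a i ∈ P} ≤ middleSum (#S + 1) q #P := by
  set P' := P.image (· - a x)
  have hP' : #P' = #P := card_image_of_injective _ sub_left_injective
  have hunion : #P + 1 ≤ #(P ∪ P') := by
    refine card_lt_card (Finset.ssubset_iff_subset_ne.2 ⟨subset_union_left, fun h => ?_⟩)
    exact ZMod.image_sub_ne_self_of_isUnit hax hP₀ hP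
      (eq_of_subset_of_card_le (subset_union_right.trans_eq h.symm) hP'.ge)
  have hPq : #P < q := by
    simpa [ZMod.card] using card_lt_card (ssubset_univ_iff.2 hP)
  set N : ZMod q → ℕ := fun s => #{I ∈ S.powerset | ∑ i ∈ I, a i = s}
  obtain ⟨A, B, hA, hAB, hsum⟩ := exists_card_eq_and_sum_add_sum_eq N P P' (m := #P + 1)
    ((card_le_card inter_subset_left).trans (Nat.le_succ _)) hunion
  have hB : #B = #P - 1 := by omega
  calc #{I ∈ (insert x S).powerset | ∑ i ∈ I, a i ∈ P}
      = ∑ s ∈ P, N s + ∑ s ∈ P', N s := by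
        rw [card_filter_powerset_insert_sum_mem a hx, card_filter_mem_eq_sum_card_fiberwise,
          card_filter_mem_eq_sum_card_fiberwise]
    _ = ∑ s ∈ A, N s + ∑ s ∈ B, N s := hsum
    _ ≤ middleSum #S q (#P + 1) + middleSum #S q (#P - 1) := by
        rw [← hA, ← hB]
        simp only [N, ← card_filter_mem_eq_sum_card_fiberwise]
        exact add_le_add (ih A) (ih B)
    _ = middleSum (#S + 1) q #P := (middleSum_succ hP₀.card_pos (by omega)).symm

theorem card_filter_powerset_sum_mem_le_middleSum (S : Finset α) (ha : ∀ i ∈ S, IsUnit (a i))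
    (P : Finset (ZMod q)) : #{I ∈ S.powerset | ∑ i ∈ I, a i ∈ P} ≤ middleSum #S q #P := by
  induction S using Finset.induction_on generalizing P with
  | empty =>
    rcases P.eq_empty_or_nonempty with rfl | hP₀
    · simp
    exact (card_filter_le _ _).trans (one_le_middleSum_zero hP₀.card_pos)
  | insert x S hx ih =>
    rcases P.eq_empty_or_nonempty with rfl | hP₀
    · simp
    rw [card_insert_of_notMem hx]
    by_cases hP : P = univ
    · subst hP
      rw [filter_true_of_mem fun _ _ => mem_univ _, card_powerset, card_insert_of_notMem hx,
        card_univ, ZMod.card]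
      exact two_pow_le_middleSum_self (Nat.one_le_iff_ne_zero.2 (NeZero.ne q))
    exact card_filter_powerset_insert_sum_mem_le a hx (ha x (mem_insert_self x S))
      (ih fun i hi => ha i (mem_insert_of_mem hi)) hP₀ hP

end SubsetSumsModQ

theorem griggs_main (q n k : ℕ) [NeZero q] (a : Fin n → ZMod q)
    (ha : ∀ i, IsUnit (a i)) (P : Finset (ZMod q)) (hP : P.card = k) :
    ((Finset.univ : Finset (Finset (Fin n))).filter
        (fun I => (∑ i ∈ I, a i) ∈ P)).card ≤ middleSum n q k := by
  have h := card_filter_powerset_sum_mem_le_middleSum a univ (fun i _ => ha i) P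
  rwa [powerset_univ, card_univ, Fintype.card_fin, hP] at h
end

section
/- Let q ≥ 1, n ≥ 0, and 1 ≤ k ≤ q. There exist reduced residues a_1, ..., a_n mod q (each coprime to q) and a set P ⊆ Z/qZ with |P| = k such that the number of subsets I ⊆ [n] with (∑_{i∈I} a_i mod q) ∈ P equals ∑_{j : (n-k)/2 ≤ j < (n+k)/2} C(n,j)_q. In fact one may take all a_i = 1 and P to be the k middle residue classes {j mod q : (n-k)/2 ≤ j < (n+k)/2}. -/
/-!
Take all `a_i = 1`, so that the sum over `I` is `|I| mod q`, and the count is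
`∑_m C(n,m) [m mod q ∈ P]`. The middle integers `(n-k)/2 ≤ j < (n+k)/2` form an interval of
length `k ≤ q`, so they are pairwise incongruent mod `q`: `P` has `k` elements, and each
`m` is congruent to at most one of them, which exchanges the two sums.
-/

open Finset

lemma card_filter_finset_eq_sum_choose {α : Type*} [Fintype α] [DecidableEq α]
    (p : ℕ → Prop) [DecidablePred p] :
    #{I : Finset α | p #I} =
      ∑ m ∈ range (Fintype.card α + 1), if p m then (Fintype.card α).choose m else 0 := by
  rw [card_filter, ← powerset_univ, sum_powerset, card_univ]
  refine sum_congr rfl fun m _ => ?_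
  rw [sum_congr rfl fun I hI => by rw [(mem_powersetCard.mp hI).2], sum_const,
    card_powersetCard, card_univ, smul_eq_mul]
  split_ifs <;> simp

lemma intCast_injOn_Ico (q : ℕ) (L : ℤ) :
    Set.InjOn (Int.cast : ℤ → ZMod q) (Set.Ico L (L + q)) := by
  intro a ha b hb hab
  rw [Set.mem_Ico] at ha hb
  rw [ZMod.intCast_eq_intCast_iff_dvd_sub] at hab
  have := Int.eq_zero_of_abs_lt_dvd hab (by rw [abs_lt]; omega)
  omega

lemma sum_modBinom_of_injOn {q : ℕ} (n : ℕ) (s : Finset ℤ)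
    (hs : Set.InjOn (Int.cast : ℤ → ZMod q) s) :
    ∑ j ∈ s, modBinom n q j =
      ∑ m ∈ range (n + 1), if (m : ZMod q) ∈ s.image Int.cast then n.choose m else 0 := by
  unfold modBinom
  rw [sum_comm]
  refine sum_congr rfl fun m _ => ?_
  have hdvd : ∀ j : ℤ, ((m : ℤ) - j) % q = 0 ↔ (j : ZMod q) = m := fun j => by
    rw [← Int.dvd_iff_emod_eq_zero, ← ZMod.intCast_eq_intCast_iff_dvd_sub, Int.cast_natCast]
  simp only [hdvd]
  rw [← sum_ite_eq' (s.image Int.cast) (m : ZMod q) fun _ => n.choose m, sum_image hs]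

lemma filter_middle_eq_Ico (n q k : ℕ) (hkq : k ≤ q) :
    {j ∈ Icc (-(q : ℤ)) (n + q) | (n : ℤ) - k ≤ 2 * j ∧ 2 * j < n + k} =
      Ico (((n : ℤ) - k + 1) / 2) ((n - k + 1) / 2 + k) := by
  ext j
  simp only [mem_filter, mem_Icc, mem_Ico]
  omega

theorem griggs_main_sharp_general (q n k : ℕ) (hkq : k ≤ q) :
    ∃ (a : Fin n → ZMod q) (P : Finset (ZMod q)),
      (∀ i, IsUnit (a i)) ∧ P.card = k ∧
      ((Finset.univ : Finset (Finset (Fin n))).filter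
          (fun I => (∑ i ∈ I, a i) ∈ P)).card = middleSum n q k ∧
      a = (fun _ => 1) ∧
      P = ((Finset.Icc (-(q : ℤ)) ((n : ℤ) + q)).filter
            (fun j => (n : ℤ) - k ≤ 2 * j ∧ 2 * j < (n : ℤ) + k)).image
            (fun j : ℤ => (j : ZMod q)) := by
  set L : ℤ := ((n : ℤ) - k + 1) / 2
  have hinj : Set.InjOn (Int.cast : ℤ → ZMod q) (Ico L (L + k)) := by
    rw [coe_Ico]
    exact (intCast_injOn_Ico q L).mono (Set.Ico_subset_Ico_right (by omega))
  refine ⟨fun _ => 1, _, fun _ => isUnit_one, ?_, ?_, rfl, rfl⟩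
  · rw [filter_middle_eq_Ico n q k hkq, card_image_of_injOn hinj, Int.card_Ico]
    omega
  · simp only [sum_const, nsmul_one]
    rw [middleSum, ← sum_filter, filter_middle_eq_Ico n q k hkq, sum_modBinom_of_injOn n _ hinj]
    simpa using card_filter_finset_eq_sum_choose (α := Fin n) fun m =>
      (m : ZMod q) ∈ (Ico L (L + k)).image Int.cast

theorem griggs_main_sharp (q n k : ℕ) [NeZero q] (hk : 1 ≤ k) (hkq : k ≤ q) :
    ∃ (a : Fin n → ZMod q) (P : Finset (ZMod q)),
      (∀ i, IsUnit (a i)) ∧ P.card = k ∧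
      ((Finset.univ : Finset (Finset (Fin n))).filter
          (fun I => (∑ i ∈ I, a i) ∈ P)).card = middleSum n q k ∧
      a = (fun _ => 1) ∧
      P = ((Finset.Icc (-(q : ℤ)) ((n : ℤ) + q)).filter
            (fun j => (n : ℤ) - k ≤ 2 * j ∧ 2 * j < (n : ℤ) + k)).image
            (fun j : ℤ => (j : ZMod q)) :=
  griggs_main_sharp_general q n k hkq
end

section
/- Let q and n satisfy q > ⌈n/2⌉, and let a_1, ..., a_n be residues mod q with gcd(a_i, q) = 1 for all i. Then the number of subsets I ⊆ [n] with ∑_{i∈I} a_i ≡ 0 (mod q) is at most C(n, ⌊n/2⌋), the ordinary central binomial coefficient. -/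
/-!
Write `N_s(T)` for the number of subsets of `s` whose `a`-sum lies in `T ⊆ ZMod q`. Splitting on
a new element `x`, `N_{s+x}(T) = N_s(T) + N_s(T - a x) = N_s(T ∪ T') + N_s(T ∩ T')` with
`T' = T - a x`; since `a x` generates `ZMod q`, `T' ≠ T` unless `T` is empty or everything, so the
sizes `u + d = 2|T|` are spread apart (`d < |T|`). The extremal configuration is `a = 1` with `T`
the `j` residues nearest to `|s|/2`: its count `F(|s|, j)` is a partial sum of the wrapped
binomial row read outward from its centre. That row is circularly unimodal (Pascal's rule
preserves it), so `F` is concave in `j`, and `F(u) + F(d) ≤ F(j + 1) + F(j - 1) = F(|s| + 1, j)`,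
again by Pascal's rule. For `T = {0}` we get `F(n, 1)`, the residue class of `n/2`, which for
`q > ⌈n/2⌉` contains `n/2` alone.
-/

open Finset Pointwise

section SubsetSums

variable {ι G : Type*} [DecidableEq ι] [AddCommGroup G] [DecidableEq G]

def subsetSumCount (a : ι → G) (s : Finset ι) (T : Finset G) : ℕ :=
  #{I ∈ s.powerset | ∑ i ∈ I, a i ∈ T}

variable (a : ι → G) (s : Finset ι)

theorem subsetSumCount_insert {x : ι} (hx : x ∉ s) (T : Finset G) :
    subsetSumCount a (insert x s) T = subsetSumCount a s T + subsetSumCount a s (-a x +ᵥ T) := by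
  simp only [subsetSumCount, card_filter, sum_powerset_insert hx]
  congr 1
  refine sum_congr rfl fun I hI => ?_
  simp only [sum_insert fun h => hx (mem_powerset.1 hI h), mem_neg_vadd_finset_iff, vadd_eq_add]

theorem subsetSumCount_union_add_inter (T T' : Finset G) :
    subsetSumCount a s (T ∪ T') + subsetSumCount a s (T ∩ T') =
      subsetSumCount a s T + subsetSumCount a s T' := by
  simp only [subsetSumCount, mem_union, mem_inter, filter_or, filter_and]
  exact card_union_add_card_inter _ _

theorem subsetSumCount_singleton_eq {x y : G} (h : x + y = ∑ i ∈ s, a i) :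
    subsetSumCount a s {x} = subsetSumCount a s {y} := by
  refine card_nbij' (s \ ·) (s \ ·) ?_ ?_ ?_ ?_ <;> intro I hI <;>
    simp only [coe_filter, mem_powerset, mem_singleton, Set.mem_ofPred_eq] at hI ⊢
  · rw [sum_sdiff_eq_sub hI.1, hI.2, ← h, add_sub_cancel_left]
    exact ⟨sdiff_subset, rfl⟩
  · rw [sum_sdiff_eq_sub hI.1, hI.2, ← h, add_sub_cancel_right]
    exact ⟨sdiff_subset, rfl⟩
  all_goals exact Finset.sdiff_sdiff_eq_self hI.1

end SubsetSums

def binomMod (q n : ℕ) (x : ZMod q) : ℕ :=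
  subsetSumCount (fun _ : ℕ => (1 : ZMod q)) (range n) {x}

namespace binomMod

variable {q : ℕ}

theorem zero_left (x : ZMod q) : binomMod q 0 x = if x = 0 then 1 else 0 := by
  by_cases hx : x = 0 <;> simp [binomMod, subsetSumCount, filter_singleton, hx, eq_comm]

theorem succ_add_one (n : ℕ) (x : ZMod q) :
    binomMod q (n + 1) (x + 1) = binomMod q n (x + 1) + binomMod q n x := by
  rw [binomMod, range_add_one, subsetSumCount_insert _ _ notMem_range_self, vadd_finset_singleton,
    vadd_eq_add, neg_add_cancel_comm_assoc]
  rfl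

theorem eq_of_add_eq {n : ℕ} {x y : ZMod q} (h : x + y = n) : binomMod q n x = binomMod q n y :=
  subsetSumCount_singleton_eq _ _ (by simpa using h)

theorem natCast_eq_choose {n c : ℕ} (hc : c < q) (hn : n < c + q) :
    binomMod q n c = n.choose c := by
  rw [binomMod, subsetSumCount, ← card_range n, ← card_powersetCard, card_range,
    powersetCard_eq_filter]
  refine congrArg card (filter_congr fun I hI => ?_)
  have hIn : #I ≤ n := card_range n ▸ card_le_card (mem_powerset.1 hI)
  simp only [sum_const, nsmul_eq_mul, mul_one, mem_singleton, ZMod.natCast_eq_natCast_iff]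
  refine ⟨fun h => h.eq_of_abs_lt ?_, fun h => h ▸ rfl⟩
  rw [abs_sub_lt_iff]
  omega

end binomMod

theorem ZMod.eq_empty_or_eq_univ_of_vadd_finset_eq {q : ℕ} [NeZero q] {g : ZMod q} (hg : IsUnit g)
    {T : Finset (ZMod q)} (h : g +ᵥ T = T) : T = ∅ ∨ T = univ := by
  have hstab : ∀ c : ZMod q, c ∈ AddAction.stabilizer (ZMod q) T := fun c => by
    have hc : (c * g⁻¹).val • g = c := by
      rw [nsmul_eq_mul, ZMod.natCast_zmod_val, mul_assoc, ZMod.inv_mul_of_unit g hg, mul_one]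
    exact hc ▸ AddSubgroup.nsmul_mem _ h _
  refine T.eq_empty_or_nonempty.imp id fun ⟨t, ht⟩ => eq_univ_of_forall fun u => ?_
  simpa using AddAction.mem_stabilizer_finset'.1 (hstab (u - t)) ht

theorem AntitoneOn.sum_range_add_sum_range_le {M : Type*} [AddCommMonoid M] [PartialOrder M]
    [IsOrderedAddMonoid M] {g : ℕ → M} {m : ℕ} (hg : AntitoneOn g (Set.Icc 1 m)) {a b k : ℕ}
    (hab : a ≤ b) (hbk : b + k ≤ m) :
    ∑ i ∈ range (b + k), g (i + 1) + ∑ i ∈ range a, g (i + 1) ≤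
      ∑ i ∈ range (a + k), g (i + 1) + ∑ i ∈ range b, g (i + 1) := by
  induction k with
  | zero => rw [add_zero, add_zero, add_comm]
  | succ k ih =>
    have hstep : g (b + k + 1) ≤ g (a + k + 1) :=
      hg ⟨by omega, by omega⟩ ⟨by omega, by omega⟩ (by omega)
    simp only [← add_assoc, sum_range_succ]
    calc _ = (∑ i ∈ range (b + k), g (i + 1) + ∑ i ∈ range a, g (i + 1)) + g (b + k + 1) :=
          by abel
      _ ≤ (∑ i ∈ range (a + k), g (i + 1) + ∑ i ∈ range b, g (i + 1)) + g (a + k + 1) :=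
          add_le_add (ih (by omega)) hstep
      _ = _ := by abel

/-- Up to the symmetry `x ↦ n - x` of `binomMod q n`, the residues `(n + i) / 2` for
`i = 1, 2, 3, …` are ordered by their distance from `n / 2`. -/
def binomModCentral (q n i : ℕ) : ℕ :=
  binomMod q n ((n + i) / 2 : ℕ)

def binomModTopSum (q n j : ℕ) : ℕ :=
  ∑ i ∈ range j, binomModCentral q n (i + 1)

namespace binomModCentral

variable {q : ℕ}

theorem succ_add_one (n j : ℕ) :
    binomModCentral q (n + 1) (j + 1) = binomModCentral q n (j + 2) + binomModCentral q n j := by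
  rw [binomModCentral, binomModCentral, binomModCentral,
    show (n + 1 + (j + 1)) / 2 = (n + j) / 2 + 1 by omega,
    show (n + (j + 2)) / 2 = (n + j) / 2 + 1 by omega, Nat.cast_add_one, binomMod.succ_add_one]

theorem add_one_eq {i : ℕ} (hi : (i : ZMod q) = 0) (n : ℕ) :
    binomModCentral q n (i + 1) = binomModCentral q n i := by
  rcases Nat.even_or_odd (n + i) with ⟨k, hk⟩ | ⟨k, hk⟩
  · rw [binomModCentral, binomModCentral, show (n + (i + 1)) / 2 = (n + i) / 2 by omega]
  · rw [binomModCentral, binomModCentral, show (n + (i + 1)) / 2 = k + 1 by omega,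
      show (n + i) / 2 = k by omega]
    refine binomMod.eq_of_add_eq ?_
    have hk' : ((n + i : ℕ) : ZMod q) = ((2 * k + 1 : ℕ) : ZMod q) := congrArg _ hk
    push_cast at hk' ⊢
    linear_combination hi - hk'

/-- The two flat steps `add_one_eq` at `i = 0` and `i = q` let the induction through Pascal's
rule close at both ends of `[1, q]`. -/
theorem add_one_le {i : ℕ} (hi : 1 ≤ i) (hiq : i + 1 ≤ q) (n : ℕ) :
    binomModCentral q n (i + 1) ≤ binomModCentral q n i := by
  induction n generalizing i with
  | zero =>
    have hne : (((i + 1) / 2 : ℕ) : ZMod q) ≠ 0 := by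
      rw [Ne, ZMod.natCast_eq_zero_iff]
      exact fun h => absurd (Nat.eq_zero_of_dvd_of_lt h (by omega)) (by omega)
    simp [binomModCentral, binomMod.zero_left, hne]
  | succ n ih =>
    obtain ⟨j, rfl⟩ : ∃ j, i = j + 1 := ⟨i - 1, by omega⟩
    have hlow : binomModCentral q n (j + 1) ≤ binomModCentral q n j := by
      rcases Nat.eq_zero_or_pos j with rfl | hj
      · exact (add_one_eq Nat.cast_zero n).le
      · exact ih hj (by omega)
    have hhigh : binomModCentral q n (j + 1 + 2) ≤ binomModCentral q n (j + 2) := by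
      rcases Nat.lt_or_ge (j + 2) q with hj | hj
      · exact ih (by omega) hj
      · exact (add_one_eq (by rw [show j + 2 = q by omega, ZMod.natCast_self]) n).le
    rw [succ_add_one, succ_add_one]
    omega

theorem antitoneOn (q n : ℕ) : AntitoneOn (binomModCentral q n) (Set.Icc 1 q) :=
  antitoneOn_of_succ_le Set.ordConnected_Icc fun i _ hi hi' =>
    add_one_le hi.1 (by simpa using hi'.2) n

end binomModCentral

namespace binomModTopSum

variable {q : ℕ}

theorem one (n : ℕ) : binomModTopSum q n 1 = binomMod q n (n / 2 : ℕ) := by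
  rw [binomModTopSum, sum_range_one, binomModCentral.add_one_eq Nat.cast_zero, binomModCentral,
    add_zero]

theorem succ_add_one (n j : ℕ) :
    binomModTopSum q (n + 1) (j + 1) = binomModTopSum q n (j + 2) + binomModTopSum q n j := by
  simp only [binomModTopSum, binomModCentral.succ_add_one, sum_add_distrib]
  rw [sum_range_succ' (fun i => binomModCentral q n (i + 1)) (j + 1),
    sum_range_succ' (fun i => binomModCentral q n i) j, binomModCentral.add_one_eq Nat.cast_zero]
  ring

theorem succ_self [NeZero q] (n : ℕ) : binomModTopSum q (n + 1) q = 2 * binomModTopSum q n q := by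
  obtain ⟨p, rfl⟩ : ∃ p, q = p + 1 := ⟨q - 1, (Nat.sub_add_cancel NeZero.one_le).symm⟩
  have hflat : binomModCentral (p + 1) n (p + 1 + 1) = binomModCentral (p + 1) n (p + 1) :=
    binomModCentral.add_one_eq (ZMod.natCast_self _) n
  rw [succ_add_one]
  simp only [binomModTopSum, sum_range_succ, hflat]
  ring

theorem add_le {n u d j : ℕ} (hdj : d ≤ j) (hud : u + d = 2 * j + 2) (hu : u ≤ q) :
    binomModTopSum q n u + binomModTopSum q n d ≤
      binomModTopSum q n (j + 2) + binomModTopSum q n j := by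
  have h := (binomModCentral.antitoneOn q n).sum_range_add_sum_range_le (a := d) (b := j + 2)
    (k := j - d) (by omega) (by omega)
  rw [show j + 2 + (j - d) = u by omega, show d + (j - d) = j by omega] at h
  exact h.trans_eq (add_comm _ _)

end binomModTopSum

theorem subsetSumCount_le_binomModTopSum {q : ℕ} [NeZero q] {ι : Type*} [DecidableEq ι]
    (a : ι → ZMod q) {s : Finset ι} (ha : ∀ i ∈ s, IsUnit (a i)) (T : Finset (ZMod q)) :
    subsetSumCount a s T ≤ binomModTopSum q #s #T := by
  induction s using Finset.induction_on generalizing T with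
  | empty =>
    rcases T.eq_empty_or_nonempty with rfl | hT
    · simp [subsetSumCount]
    calc subsetSumCount a ∅ T ≤ #(∅ : Finset ι).powerset := card_filter_le _ _
      _ = binomModTopSum q 0 1 := by simp [binomModTopSum.one, binomMod.zero_left]
      _ ≤ binomModTopSum q 0 #T := sum_le_sum_of_subset (range_subset_range.2 hT.card_pos)
  | insert x s hx ih =>
    have ih' := ih fun i hi => ha i (mem_insert_of_mem hi)
    rw [subsetSumCount_insert a s hx, card_insert_of_notMem hx]
    set T' := -a x +ᵥ T
    by_cases hT : T' = T
    · rcases ZMod.eq_empty_or_eq_univ_of_vadd_finset_eq (ha x (mem_insert_self x s)).neg hT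
        with rfl | rfl
      · simp [subsetSumCount, hT]
      · have h := ih' univ
        rw [card_univ, ZMod.card] at h ⊢
        rw [hT, binomModTopSum.succ_self]
        omega
    have hlt : #(T ∩ T') < #T := card_lt_card <| inter_subset_left.ssubset_of_ne fun h => hT <|
      (eq_of_subset_of_card_le (h ▸ inter_subset_right : T ⊆ T') (card_vadd_finset _ _).le).symm
    obtain ⟨j, hj⟩ : ∃ j, #T = j + 1 := ⟨#T - 1, by omega⟩
    have hsum : #(T ∪ T') + #(T ∩ T') = 2 * #T := by
      rw [card_union_add_card_inter, card_vadd_finset, two_mul]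
    calc subsetSumCount a s T + subsetSumCount a s T'
        = subsetSumCount a s (T ∪ T') + subsetSumCount a s (T ∩ T') :=
          (subsetSumCount_union_add_inter a s T T').symm
      _ ≤ binomModTopSum q #s #(T ∪ T') + binomModTopSum q #s #(T ∩ T') :=
          add_le_add (ih' _) (ih' _)
      _ ≤ binomModTopSum q #s (j + 2) + binomModTopSum q #s j :=
          binomModTopSum.add_le (by omega) (by omega) ((card_le_univ _).trans_eq (ZMod.card q))
      _ = binomModTopSum q (#s + 1) #T := by rw [hj, binomModTopSum.succ_add_one]

theorem vaughan_wooley_general (q n : ℕ) (hq : q > (n + 1) / 2)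
    (a : Fin n → ZMod q) (ha : ∀ i, IsUnit (a i)) :
    ((Finset.univ : Finset (Finset (Fin n))).filter
        (fun I => (∑ i ∈ I, a i) = 0)).card ≤ n.choose (n / 2) := by
  have : NeZero q := ⟨by omega⟩
  have h := subsetSumCount_le_binomModTopSum a (s := univ) (fun i _ => ha i) {0}
  rw [card_univ, Fintype.card_fin, card_singleton, binomModTopSum.one,
    binomMod.natCast_eq_choose (by omega) (by omega)] at h
  simpa [subsetSumCount] using h

theorem vaughan_wooley (q n : ℕ) [NeZero q] (hq : q > (n + 1) / 2)
    (a : Fin n → ZMod q) (ha : ∀ i, IsUnit (a i)) :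
    ((Finset.univ : Finset (Finset (Fin n))).filter
        (fun I => (∑ i ∈ I, a i) = 0)).card ≤ n.choose (n / 2) :=
  vaughan_wooley_general q n hq a ha
end

section
/- Let n ≥ 1 and q ≥ 1, and take a_i = 1 for 1 ≤ i ≤ ⌈n/2⌉ and a_i = -1 (i.e., q-1 mod q) for ⌈n/2⌉ < i ≤ n. If additionally q > ⌈n/2⌉, then the number of subsets I ⊆ [n] with ∑_{i∈I} a_i ≡ 0 (mod q) equals C(n, ⌊n/2⌋). -/
open Finset
open scoped symmDiff

lemma card_symmDiff' {α : Type*} [DecidableEq α] (s t : Finset α) :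
    (s ∆ t).card = (s \ t).card + (t \ s).card := by
  rw [symmDiff_def, sup_eq_union, Finset.card_union_of_disjoint]
  exact disjoint_sdiff_sdiff

theorem plus_minus_one_attains (q n : ℕ) [NeZero q] (hn : 1 ≤ n)
    (hq : q > (n + 1) / 2)
    (a : Fin n → ZMod q) (ha : ∀ i : Fin n, a i = if (i : ℕ) < (n + 1) / 2 then (1 : ZMod q) else -1) :
    ((Finset.univ : Finset (Finset (Fin n))).filter
        (fun I => (∑ i ∈ I, a i) = 0)).card = n.choose (n / 2) := by
  set m := (n + 1) / 2 with hm
  have hmn : m ≤ n := by omega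
  set A : Finset (Fin n) := univ.filter (fun i => (i : ℕ) < m) with hA
  have hAcard : A.card = m := by
    have : A = (Finset.range m).attachFin (fun i hi => lt_of_lt_of_le (Finset.mem_range.mp hi) hmn) := by
      ext i
      simp [hA, Finset.mem_attachFin]
    rw [this, Finset.card_attachFin, Finset.card_range]
  -- sum characterization
  have key : ∀ I : Finset (Fin n), (∑ i ∈ I, a i) = 0 ↔ (I ∩ A).card = (I \ A).card := by
    intro I
    have hsum : (∑ i ∈ I, a i) = ((I ∩ A).card : ZMod q) - ((I \ A).card : ZMod q) := by
      have : ∀ i ∈ I, a i = if i ∈ A then (1 : ZMod q) else -1 := by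
        intro i _
        rw [ha i]
        simp [hA]
      rw [Finset.sum_congr rfl this, Finset.sum_ite, Finset.sum_const, Finset.sum_const]
      simp [Finset.filter_mem_eq_inter, sub_eq_add_neg, Finset.inter_comm,
        Finset.sdiff_eq_inter_compl]
      congr 2
      ext i; simp
    rw [hsum, sub_eq_zero]
    have h1 : (I ∩ A).card < q := lt_of_le_of_lt (le_trans (Finset.card_le_card (Finset.inter_subset_right)) hAcard.le) hq
    have h2 : (I \ A).card < q := by
      have : I \ A ⊆ Aᶜ := fun i hi => by
        simp only [Finset.mem_compl]; exact (Finset.mem_sdiff.mp hi).2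
      have := Finset.card_le_card this
      rw [Finset.card_compl, hAcard, Fintype.card_fin] at this
      omega
    constructor
    · intro h
      have := (ZMod.natCast_eq_natCast_iff' _ _ _).mp h
      rwa [Nat.mod_eq_of_lt h1, Nat.mod_eq_of_lt h2] at this
    · intro h; rw [h]
  have hcardAI : ∀ I : Finset (Fin n), (A \ I).card = m - (I ∩ A).card := by
    intro I
    have := Finset.card_sdiff_add_card_inter A I
    rw [hAcard, Finset.inter_comm] at this
    have hle : (I ∩ A).card ≤ m := le_trans (Finset.card_le_card Finset.inter_subset_right) hAcard.le
    omega
  -- bijection I ↦ I ∆ A with sets of card m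
  have hbij : (univ.filter (fun I : Finset (Fin n) => (∑ i ∈ I, a i) = 0)).card
      = (univ.filter (fun I : Finset (Fin n) => I.card = m)).card := by
    apply Finset.card_nbij (fun I => I ∆ A)
    · intro I hI
      simp only [Finset.mem_coe, Finset.mem_filter, Finset.mem_univ, true_and] at hI ⊢
      rw [key I] at hI
      rw [card_symmDiff', hcardAI I]
      have hle : (I ∩ A).card ≤ m := le_trans (Finset.card_le_card Finset.inter_subset_right) hAcard.le
      omega
    · intro I _ J _ h
      have := congrArg (fun s => s ∆ A) h
      simpa [symmDiff_symmDiff_cancel_right] using this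
    · intro J hJ
      simp only [Finset.coe_filter, Set.mem_setOf_eq, Finset.mem_univ, true_and,
        Set.mem_image] at hJ ⊢
      refine ⟨J ∆ A, ?_, by rw [symmDiff_symmDiff_cancel_right]⟩
      rw [key]
      have h1 : ((J ∆ A) ∩ A).card = (A \ J).card := by
        congr 1
        ext i
        simp [Finset.mem_symmDiff, Finset.mem_inter, Finset.mem_sdiff]
        tauto
      have h2 : ((J ∆ A) \ A).card = (J \ A).card := by
        congr 1
        ext i
        simp [Finset.mem_symmDiff, Finset.mem_sdiff]
      rw [h1, h2, hcardAI J]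
      have := Finset.card_sdiff_add_card_inter J A
      omega
  rw [hbij]
  have : (univ.filter (fun I : Finset (Fin n) => I.card = m)) = Finset.powersetCard m (univ : Finset (Fin n)) := by
    rw [Finset.powersetCard_eq_filter, Finset.powerset_univ]
  rw [this, Finset.card_powersetCard, Finset.card_univ, Fintype.card_fin]
  have h2 : n - n / 2 = m := by omega
  rw [← Nat.choose_symm (Nat.div_le_self n 2), h2]
end

section
/- Fix q ≥ 2 and a sequence a_1, a_2, ... of residues mod q, each coprime to q. For each n and ρ ∈ Z/qZ, let N_n(ρ) be the number of subsets I ⊆ [n] with ∑_{i∈I} a_i ≡ ρ (mod q). Then for every ρ, N_n(ρ)/2^n → 1/q as n → ∞; i.e., the distribution of subset sums is asymptotically uniform. -/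
open Finset


def scnt (q n : ℕ) (a : ℕ → ZMod q) (ρ : ZMod q) : ℕ :=
  ((Finset.univ : Finset (Fin n → Bool)).filter
    (fun g => (∑ i, if g i then a (i : ℕ) else 0) = ρ)).card

lemma card_eq_scnt (q n : ℕ) (a : ℕ → ZMod q) (ρ : ZMod q) :
    (((Finset.univ : Finset (Finset (Fin n))).filter
      (fun I : Finset (Fin n) => (∑ i ∈ I, a (i : ℕ)) = ρ)).card) = scnt q n a ρ := by
  apply Finset.card_equiv (⟨fun I i => decide (i ∈ I), fun g => univ.filter (fun i => g i),
    fun I => by ext i; simp, fun g => by ext i; simp⟩ : Finset (Fin n) ≃ (Fin n → Bool))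
  intro I
  simp only [mem_filter, mem_univ, true_and, Equiv.coe_fn_mk, decide_eq_true_eq]
  rw [Finset.sum_ite_mem, univ_inter]

lemma scnt_succ (q n : ℕ) (a : ℕ → ZMod q) (ρ : ZMod q) :
    scnt q (n+1) a ρ = scnt q n (a ∘ Nat.succ) ρ + scnt q n (a ∘ Nat.succ) (ρ - a 0) := by
  unfold scnt
  rw [Finset.card_filter, Finset.card_filter, Finset.card_filter]
  rw [← Fintype.sum_equiv (Fin.consEquiv (fun _ => Bool))
    (fun p : Bool × (Fin n → Bool) =>
      if (∑ i, if (Fin.cons p.1 p.2 : Fin (n+1) → Bool) i then a (i : ℕ) else 0) = ρ then 1 else 0)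
    _ (fun p => rfl)]
  rw [Fintype.sum_prod_type, Fintype.sum_bool]
  have key : ∀ (b : Bool) (g : Fin n → Bool),
      (∑ i, if (Fin.cons b g : Fin (n+1) → Bool) i then a (i : ℕ) else 0)
      = (if b then a 0 else 0) + ∑ i : Fin n, if g i then (a ∘ Nat.succ) (i : ℕ) else 0 := by
    intro b g
    rw [Fin.sum_univ_succ]
    simp [Fin.cons_zero, Fin.cons_succ, Function.comp]
  have h1 : ∀ g : Fin n → Bool,
      ((∑ i, if (Fin.cons true g : Fin (n+1) → Bool) i then a (i : ℕ) else 0) = ρ)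
      ↔ ((∑ i : Fin n, if g i then (a ∘ Nat.succ) (i : ℕ) else 0) = ρ - a 0) := by
    intro g; rw [key]; simp [eq_sub_iff_add_eq, add_comm]
  have h0 : ∀ g : Fin n → Bool,
      ((∑ i, if (Fin.cons false g : Fin (n+1) → Bool) i then a (i : ℕ) else 0) = ρ)
      ↔ ((∑ i : Fin n, if g i then (a ∘ Nat.succ) (i : ℕ) else 0) = ρ) := by
    intro g; rw [key]; simp
  rw [add_comm]
  congr 1
  · exact Finset.sum_congr rfl (fun g _ => by simp only [h0 g])
  · exact Finset.sum_congr rfl (fun g _ => by simp only [h1 g])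

noncomputable def dev (q n : ℕ) (a : ℕ → ZMod q) (ρ : ZMod q) : ℝ :=
  (scnt q n a ρ : ℝ) / 2 ^ n - 1 / q

noncomputable def Dsq (q n : ℕ) [NeZero q] (a : ℕ → ZMod q) : ℝ :=
  ∑ ρ : ZMod q, (dev q n a ρ) ^ 2

lemma sum_scnt (q n : ℕ) [NeZero q] (a : ℕ → ZMod q) :
    ∑ ρ : ZMod q, scnt q n a ρ = 2 ^ n := by
  unfold scnt
  rw [← Finset.card_eq_sum_card_fiberwise (f := fun g : Fin n → Bool =>
      (∑ i, if g i then a (i : ℕ) else 0)) (fun x _ => Finset.mem_univ _)]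
  simp [Finset.card_univ]

lemma sum_dev (q n : ℕ) [NeZero q] (a : ℕ → ZMod q) :
    ∑ ρ : ZMod q, dev q n a ρ = 0 := by
  unfold dev
  rw [Finset.sum_sub_distrib, ← Finset.sum_div, ← Nat.cast_sum, sum_scnt]
  have hq : (q : ℝ) ≠ 0 := Nat.cast_ne_zero.2 (NeZero.ne q)
  simp [Finset.card_univ, ZMod.card]

lemma scnt_zero (q : ℕ) (a : ℕ → ZMod q) (ρ : ZMod q) :
    scnt q 0 a ρ = if (0 : ZMod q) = ρ then 1 else 0 := by
  simp only [scnt]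
  rcases eq_or_ne (0 : ZMod q) ρ with h | h <;> simp [h]


lemma key_poincare (q : ℕ) [NeZero q] (e : ZMod q → ℝ) (hsum : ∑ σ : ZMod q, e σ = 0)
    (a0 : ZMod q) (ha0 : IsUnit a0) :
    ∑ ρ : ZMod q, e ρ ^ 2 ≤ (q : ℝ) ^ 3 * ∑ ρ : ZMod q, (e ρ - e (ρ - a0)) ^ 2 := by
  set S : ℝ := ∑ ρ : ZMod q, (e ρ - e (ρ - a0)) ^ 2 with hSdef
  have hS : 0 ≤ S := Finset.sum_nonneg (fun ρ _ => sq_nonneg _)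
  set M : ℝ := Real.sqrt S with hMdef
  have hM : 0 ≤ M := Real.sqrt_nonneg _
  have claim1 : ∀ τ : ZMod q, |e τ - e (τ - a0)| ≤ M := by
    intro τ
    apply Real.abs_le_sqrt
    exact Finset.single_le_sum (f := fun ρ => (e ρ - e (ρ - a0)) ^ 2) (fun ρ _ => sq_nonneg _) (Finset.mem_univ τ)
  have claim2 : ∀ (ρ : ZMod q) (k : ℕ),
      e ρ - e (ρ - (k : ZMod q) * a0)
      = ∑ j ∈ Finset.range k, (e (ρ - (j : ZMod q) * a0) - e (ρ - (j : ZMod q) * a0 - a0)) := by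
    intro ρ k
    induction k with
    | zero => simp
    | succ m ih =>
      rw [Finset.sum_range_succ, ← ih]
      have : ρ - ((m+1 : ℕ) : ZMod q) * a0 = ρ - (m : ZMod q) * a0 - a0 := by
        push_cast; ring
      rw [this]; ring
  have claim3 : ∀ ρ σ : ZMod q, |e ρ - e σ| ≤ (q : ℝ) * M := by
    intro ρ σ
    set u := ha0.unit with hu
    set k : ℕ := ((ρ - σ) * ((u⁻¹ : (ZMod q)ˣ) : ZMod q)).val with hk
    have hcast : ((k : ℕ) : ZMod q) = (ρ - σ) * ((u⁻¹ : (ZMod q)ˣ) : ZMod q) :=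
      ZMod.natCast_rightInverse _
    have ha0u : (u : ZMod q) = a0 := ha0.unit_spec
    have hσ : σ = ρ - (k : ZMod q) * a0 := by
      rw [hcast, ← ha0u, Units.inv_mul_cancel_right]; ring
    rw [hσ, claim2 ρ k]
    calc |∑ j ∈ Finset.range k, (e (ρ - (j : ZMod q) * a0) - e (ρ - (j : ZMod q) * a0 - a0))|
        ≤ ∑ j ∈ Finset.range k, |e (ρ - (j : ZMod q) * a0) - e (ρ - (j : ZMod q) * a0 - a0)| :=
          Finset.abs_sum_le_sum_abs _ _
      _ ≤ ∑ _j ∈ Finset.range k, M := Finset.sum_le_sum (fun j _ => claim1 _)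
      _ = (k : ℝ) * M := by rw [Finset.sum_const, Finset.card_range]; simp
      _ ≤ (q : ℝ) * M := by
          apply mul_le_mul_of_nonneg_right _ hM
          exact_mod_cast (ZMod.val_lt _).le
  have hqpos : 0 < (q : ℝ) := by
    have := NeZero.pos q; exact_mod_cast this
  have claim4 : ∀ ρ : ZMod q, |e ρ| ≤ (q : ℝ) * M := by
    intro ρ
    have h1 : (q : ℝ) * e ρ = ∑ σ : ZMod q, (e ρ - e σ) := by
      rw [Finset.sum_sub_distrib, hsum, Finset.sum_const, Finset.card_univ, ZMod.card]
      simp [nsmul_eq_mul]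
    have h2 : (q : ℝ) * |e ρ| ≤ (q : ℝ) * ((q : ℝ) * M) := by
      calc (q : ℝ) * |e ρ| = |(q : ℝ) * e ρ| := by
            rw [abs_mul, abs_of_nonneg hqpos.le]
        _ = |∑ σ : ZMod q, (e ρ - e σ)| := by rw [h1]
        _ ≤ ∑ σ : ZMod q, |e ρ - e σ| := Finset.abs_sum_le_sum_abs _ _
        _ ≤ ∑ _σ : ZMod q, (q : ℝ) * M := Finset.sum_le_sum (fun σ _ => claim3 ρ σ)
        _ = (q : ℝ) * ((q : ℝ) * M) := by
            rw [Finset.sum_const, Finset.card_univ, ZMod.card]; simp [nsmul_eq_mul]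
    exact le_of_mul_le_mul_left h2 hqpos
  calc ∑ ρ : ZMod q, e ρ ^ 2 ≤ ∑ _ρ : ZMod q, ((q : ℝ) * M) ^ 2 := by
        apply Finset.sum_le_sum
        intro ρ _
        rw [← sq_abs]
        exact pow_le_pow_left₀ (abs_nonneg _) (claim4 ρ) 2
    _ = (q : ℝ) * ((q : ℝ) * M) ^ 2 := by
        rw [Finset.sum_const, Finset.card_univ, ZMod.card]; simp [nsmul_eq_mul]
    _ = (q : ℝ) ^ 3 * S := by
        rw [mul_pow, hMdef, Real.sq_sqrt hS]; ring

lemma dev_succ (q n : ℕ) (a : ℕ → ZMod q) (ρ : ZMod q) :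
    dev q (n+1) a ρ = (dev q n (a ∘ Nat.succ) ρ + dev q n (a ∘ Nat.succ) (ρ - a 0)) / 2 := by
  unfold dev
  rw [scnt_succ]
  push_cast
  ring

lemma Dsq_succ_le (q n : ℕ) [NeZero q] (a : ℕ → ZMod q) (ha0 : IsUnit (a 0)) :
    Dsq q (n+1) a ≤ (1 - 1/(4*(q : ℝ)^3)) * Dsq q n (a ∘ Nat.succ) := by
  set E : ZMod q → ℝ := dev q n (a ∘ Nat.succ) with hE
  set D : ℝ := Dsq q n (a ∘ Nat.succ) with hD
  set S : ℝ := ∑ ρ : ZMod q, (E ρ - E (ρ - a 0)) ^ 2 with hSdef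
  have hqpos : 0 < (q : ℝ) := by exact_mod_cast NeZero.pos q
  have hq3 : 0 < (q : ℝ) ^ 3 := by positivity
  have hshift : ∑ ρ : ZMod q, E (ρ - a 0) ^ 2 = D := by
    rw [hD]; unfold Dsq
    exact Fintype.sum_equiv (Equiv.subRight (a 0)) _ _ (fun ρ => rfl)
  have hid : Dsq q (n+1) a = D - S / 4 := by
    unfold Dsq
    have h1 : ∀ ρ : ZMod q, dev q (n+1) a ρ ^ 2
        = E ρ ^ 2 / 2 + E (ρ - a 0) ^ 2 / 2 - (E ρ - E (ρ - a 0)) ^ 2 / 4 := by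
      intro ρ; rw [dev_succ]; ring
    rw [Finset.sum_congr rfl (fun ρ _ => h1 ρ), Finset.sum_sub_distrib,
      Finset.sum_add_distrib, ← Finset.sum_div, ← Finset.sum_div, ← Finset.sum_div, hshift]
    have : (∑ ρ : ZMod q, E ρ ^ 2) = D := rfl
    rw [this]
    ring
  have hkey : D ≤ (q : ℝ) ^ 3 * S := key_poincare q E (sum_dev q n _) (a 0) ha0
  have hDS : D / (q : ℝ) ^ 3 ≤ S := by rw [div_le_iff₀ hq3]; linarith
  have heq : (1 - 1/(4*(q : ℝ)^3)) * D = D - (D / (q : ℝ)^3) / 4 := by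
    field_simp
  rw [hid, heq]
  linarith
lemma Dsq_le (q : ℕ) (hq : 2 ≤ q) [NeZero q] :
    ∀ (n : ℕ) (a : ℕ → ZMod q), (∀ i, IsUnit (a i)) →
      Dsq q n a ≤ (q : ℝ) * (1 - 1/(4*(q : ℝ)^3)) ^ n := by
  have hq2 : (2 : ℝ) ≤ (q : ℝ) := by exact_mod_cast hq
  have hc0 : (0 : ℝ) ≤ 1 - 1/(4*(q : ℝ)^3) := by
    have h8 : (8 : ℝ) ≤ (q : ℝ)^3 := by
      have := pow_le_pow_left₀ (by norm_num : (0:ℝ) ≤ 2) hq2 3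
      norm_num at this ⊢; linarith
    have h1 : (1 : ℝ) ≤ 4*(q : ℝ)^3 := by linarith
    have := div_le_one_of_le₀ h1 (by positivity)
    linarith
  intro n
  induction n with
  | zero =>
    intro a ha
    unfold Dsq
    have hbd : ∀ ρ : ZMod q, dev q 0 a ρ ^ 2 ≤ 1 := by
      intro ρ
      unfold dev
      rw [scnt_zero]
      have h1 : (0 : ℝ) ≤ 1 / (q : ℝ) := by positivity
      have h2 : 1 / (q : ℝ) ≤ 1 := by
        apply div_le_one_of_le₀ (by linarith) (by linarith)
      rcases eq_or_ne (0 : ZMod q) ρ with h | h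
      · rw [if_pos h]; norm_num
        rw [abs_le]
        constructor <;> rw [inv_eq_one_div] <;> linarith
      · rw [if_neg h]; norm_num
        rw [inv_le_one_iff₀]
        right; nlinarith
    calc ∑ ρ : ZMod q, dev q 0 a ρ ^ 2 ≤ ∑ _ρ : ZMod q, (1:ℝ) :=
          Finset.sum_le_sum (fun ρ _ => hbd ρ)
      _ = (q : ℝ) := by rw [Finset.sum_const, Finset.card_univ, ZMod.card]; simp
      _ = (q : ℝ) * (1 - 1/(4*(q : ℝ)^3)) ^ 0 := by simp
  | succ n ih =>
    intro a ha
    calc Dsq q (n+1) a ≤ (1 - 1/(4*(q : ℝ)^3)) * Dsq q n (a ∘ Nat.succ) :=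
          Dsq_succ_le q n a (ha 0)
      _ ≤ (1 - 1/(4*(q : ℝ)^3)) * ((q : ℝ) * (1 - 1/(4*(q : ℝ)^3)) ^ n) := by
          apply mul_le_mul_of_nonneg_left _ hc0
          exact ih (a ∘ Nat.succ) (fun i => ha (i + 1))
      _ = (q : ℝ) * (1 - 1/(4*(q : ℝ)^3)) ^ (n+1) := by ring

theorem subset_sums_asymptotically_uniform (q : ℕ) (hq : 2 ≤ q)
    (a : ℕ → ZMod q) (ha : ∀ i, IsUnit (a i)) (ρ : ZMod q) :
    Filter.Tendsto
      (fun n : ℕ =>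
        (((Finset.univ : Finset (Finset (Fin n))).filter
            (fun I : Finset (Fin n) => (∑ i ∈ I, a (i : ℕ)) = ρ)).card : ℝ) / 2 ^ n)
      Filter.atTop (nhds (1 / q)) := by
  haveI : NeZero q := ⟨by omega⟩
  set c : ℝ := 1 - 1/(4*(q : ℝ)^3) with hc
  have hq2 : (2 : ℝ) ≤ (q : ℝ) := by exact_mod_cast hq
  have h8 : (8 : ℝ) ≤ (q : ℝ)^3 := by
    have := pow_le_pow_left₀ (by norm_num : (0:ℝ) ≤ 2) hq2 3
    norm_num at this ⊢; linarith
  have hc0 : (0 : ℝ) ≤ c := by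
    have := div_le_one_of_le₀ (by linarith : (1:ℝ) ≤ 4*(q:ℝ)^3) (by positivity)
    rw [hc]; linarith
  have hc1 : c < 1 := by
    rw [hc]
    have : (0:ℝ) < 1/(4*(q:ℝ)^3) := by positivity
    linarith
  -- the deviation is bounded
  have hdev : ∀ n : ℕ, |dev q n a ρ| ≤ Real.sqrt ((q : ℝ) * c ^ n) := by
    intro n
    apply Real.abs_le_sqrt
    calc dev q n a ρ ^ 2 ≤ Dsq q n a :=
          Finset.single_le_sum (f := fun σ => dev q n a σ ^ 2)
            (fun σ _ => sq_nonneg _) (Finset.mem_univ ρ)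
      _ ≤ (q : ℝ) * c ^ n := Dsq_le q hq n a ha
  have hg : Filter.Tendsto (fun n : ℕ => Real.sqrt ((q : ℝ) * c ^ n))
      Filter.atTop (nhds 0) := by
    have h1 : Filter.Tendsto (fun n : ℕ => (q : ℝ) * c ^ n) Filter.atTop (nhds 0) := by
      have := (tendsto_pow_atTop_nhds_zero_of_lt_one hc0 hc1).const_mul (q : ℝ)
      simpa using this
    have := h1.sqrt
    simpa using this
  have hdev0 : Filter.Tendsto (fun n : ℕ => dev q n a ρ) Filter.atTop (nhds 0) :=
    squeeze_zero_norm (fun n => hdev n) hg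
  have := hdev0.add_const (1 / (q : ℝ))
  rw [zero_add] at this
  convert this using 2 with n
  rw [card_eq_scnt]
  unfold dev
  ring
end

section
/- Let a_1, ..., a_n be real numbers with |a_i| ≥ 1 for all i, and let S be an open interval of length 1 in ℝ. Then the number of the 2^n sums ∑_{i∈I} a_i, I ⊆ [n], lying in S is at most C(n, ⌊n/2⌋). -/
/-!
With `P = {i | a i < 0}`, the map `I ↦ I ∆ P` is injective and turns the subset sums of `a`
into the subset sums of `|a|` shifted by the constant `∑ i ∈ P, |a i|`, so we may replace `a`
by `|a| ≥ 1`.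
Then the sets whose sums lie in an open interval of length `1` form an antichain: enlarging a set
increases its sum by at least `1`. Sperner's theorem bounds the size of such an antichain.
-/

open Finset
open scoped symmDiff

section
variable {ι M : Type*} [AddCommGroup M] [LinearOrder M] [IsOrderedAddMonoid M]

theorem isAntichain_sum_mem_Ioo {b : ι → M} {r : M} (hb : ∀ i, r ≤ b i) (s : Finset (Finset ι))
    (y : M) : IsAntichain (· ⊆ ·) ((s.filter fun J => ∑ i ∈ J, b i ∈ Set.Ioo y (y + r)) :
      Set (Finset ι)) := by
  classical
  intro J hJ K hK hJK hsub
  simp only [coe_filter, Set.mem_ofPred_eq, Set.mem_Ioo] at hJ hK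
  obtain ⟨i, hi⟩ : (K \ J).Nonempty := sdiff_nonempty.2 fun h => hJK (hsub.antisymm h)
  have hr : 0 < r := lt_add_iff_pos_right y |>.1 (hJ.2.1.trans hJ.2.2)
  have hgap : r ≤ ∑ i ∈ K, b i - ∑ i ∈ J, b i := by
    rw [← sum_sdiff_eq_sub hsub]
    exact (hb i).trans (single_le_sum (fun j _ => hr.le.trans (hb j)) hi)
  exact hgap.not_gt (sub_lt_iff_lt_add'.2 (hK.2.2.trans (add_lt_add_left hJ.2.1 r)))

theorem sum_symmDiff_abs [Fintype ι] [DecidableEq ι] (a : ι → M) (I : Finset ι) :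
    ∑ i ∈ I ∆ univ.filter (a · < 0), |a i| = ∑ i ∈ I, a i + ∑ i ∈ univ.filter (a · < 0), |a i| := by
  simp only [← Fintype.sum_ite_mem _ (fun i => |a i|), ← Fintype.sum_ite_mem I, ← sum_add_distrib]
  refine sum_congr rfl fun i _ => ?_
  rcases lt_or_ge (a i) 0 with h | h
  · by_cases hi : i ∈ I <;> simp [hi, h, abs_of_neg h, mem_symmDiff]
  · by_cases hi : i ∈ I <;> simp [hi, h.not_gt, abs_of_nonneg h, mem_symmDiff]

end

theorem erdos_littlewood_offord (n : ℕ) (a : Fin n → ℝ) (ha : ∀ i, 1 ≤ |a i|)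
    (x : ℝ) :
    ((Finset.univ : Finset (Finset (Fin n))).filter
        (fun I => (∑ i ∈ I, a i) ∈ Set.Ioo x (x + 1))).card ≤ n.choose (n / 2) := by
  set P := univ.filter (a · < 0)
  set c := ∑ i ∈ P, |a i|
  calc _ ≤ (univ.filter fun J => ∑ i ∈ J, |a i| ∈ Set.Ioo (x + c) (x + c + 1)).card := by
        refine card_le_card_of_injOn (· ∆ P) (fun I hI => ?_) (symmDiff_left_injective P).injOn
        simp only [coe_filter, mem_univ, true_and, Set.mem_ofPred_eq, Set.mem_Ioo] at hI ⊢
        rw [sum_symmDiff_abs]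
        constructor <;> linarith [hI.1, hI.2]
    _ ≤ n.choose (n / 2) := by simpa using (isAntichain_sum_mem_Ioo ha univ (x + c)).sperner
end

section
/- Let d ≥ 1 be an integer and let a_1, ..., a_n be real numbers with |a_i| ≥ 1 for all i. Then for any open interval S ⊆ ℝ of length d, the number of subsets I ⊆ [n] with ∑_{i∈I} a_i ∈ S is at most the sum of the d middle binomial coefficients ∑_{(n-d)/2 ≤ j < (n+d)/2} C(n,j). -/
set_option maxHeartbeats 1000000

open Finset
open scoped symmDiff

private lemma choose_mono_half (n a : ℕ) :
    ∀ b, a ≤ b → b ≤ n / 2 → n.choose a ≤ n.choose b := by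
  intro b
  induction b with
  | zero => intro h _; simp [Nat.le_zero.mp h]
  | succ m ih =>
    intro hab hb
    rcases Nat.lt_succ_iff_lt_or_eq.mp (Nat.lt_succ_of_le hab) with h | h
    · exact (ih (by omega) (by omega)).trans
        (Nat.choose_le_succ_of_lt_half_left (by omega))
    · subst h; exact le_rfl

private lemma choose_le_of_outside {n q d r : ℕ} (h2q : 2 * q ≤ n) (hqd : n ≤ 2 * q + d)
    (hr : r ≤ n) (hout : r < q ∨ q + d ≤ r) : n.choose r ≤ n.choose q := by
  rcases hout with h | h
  · exact choose_mono_half n r q (le_of_lt h) (by omega)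
  · rw [← Nat.choose_symm hr]
    exact choose_mono_half n (n - r) q (by omega) (by omega)

theorem erdos_littlewood_offord_general (n d : ℕ) (hd : 1 ≤ d)
    (a : Fin n → ℝ) (ha : ∀ i, 1 ≤ |a i|) (x : ℝ) :
    ((Finset.univ : Finset (Finset (Fin n))).filter
        (fun I => (∑ i ∈ I, a i) ∈ Set.Ioo x (x + d))).card ≤
      ∑ j ∈ Finset.range (n + 1),
        if (n : ℤ) - d ≤ 2 * j ∧ 2 * (j : ℤ) < (n : ℤ) + d then n.choose j else 0 := by
  classical
  rcases lt_or_ge n d with hnd | hdn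
  · -- trivial case d > n
    calc ((Finset.univ : Finset (Finset (Fin n))).filter
        (fun I => (∑ i ∈ I, a i) ∈ Set.Ioo x (x + d))).card
        ≤ (Finset.univ : Finset (Finset (Fin n))).card := card_filter_le _ _
      _ = 2 ^ n := by simp
      _ = ∑ j ∈ Finset.range (n + 1), n.choose j := (Nat.sum_range_choose n).symm
      _ = _ := by
          refine Finset.sum_congr rfl fun j hj => ?_
          rw [mem_range] at hj
          rw [if_pos ⟨by omega, by omega⟩]
  -- main case d ≤ n
  set N : Finset (Fin n) := univ.filter (fun i => a i < 0) with hN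
  set b : Fin n → ℝ := fun i => |a i| with hb
  set y : ℝ := x - ∑ i ∈ N, a i with hy
  have hb1 : ∀ i, (1 : ℝ) ≤ b i := ha
  have hsum : ∀ I : Finset (Fin n),
      ∑ i ∈ (I ∆ N), b i = (∑ i ∈ I, a i) - ∑ i ∈ N, a i := by
    intro I
    have hdisj : Disjoint (I \ N) (N \ I) := disjoint_sdiff_sdiff
    have h1 : I ∆ N = (I \ N) ∪ (N \ I) := rfl
    rw [h1, Finset.sum_union hdisj, ← Finset.sum_sdiff_sub_sum_sdiff]
    have e1 : ∑ i ∈ I \ N, b i = ∑ i ∈ I \ N, a i := by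
      refine Finset.sum_congr rfl fun i hi => ?_
      have : ¬ a i < 0 := by
        have := (Finset.mem_sdiff.mp hi).2
        simpa [hN] using this
      simp [hb, abs_of_nonneg (not_lt.mp this)]
    have e2 : ∑ i ∈ N \ I, b i = -∑ i ∈ N \ I, a i := by
      rw [← Finset.sum_neg_distrib]
      refine Finset.sum_congr rfl fun i hi => ?_
      have : a i < 0 := by
        have := (Finset.mem_sdiff.mp hi).1
        simpa [hN] using this
      simp [hb, abs_of_neg this]
    rw [e1, e2]
    ring
  set F : Finset (Finset (Fin n)) :=
    univ.filter (fun J => (∑ i ∈ J, b i) ∈ Set.Ioo y (y + d)) with hF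
  have hcard : ((Finset.univ : Finset (Finset (Fin n))).filter
      (fun I => (∑ i ∈ I, a i) ∈ Set.Ioo x (x + d))).card = F.card := by
    refine Finset.card_bij' (fun I _ => I ∆ N) (fun J _ => J ∆ N) ?_ ?_ ?_ ?_
    · intro I hI
      rw [Finset.mem_filter] at hI ⊢
      obtain ⟨h1, h2⟩ := hI.2
      refine ⟨mem_univ _, ?_, ?_⟩ <;> rw [hsum I] <;> simp [hy] <;> linarith
    · intro J hJ
      rw [Finset.mem_filter] at hJ ⊢
      have hJs : ∑ i ∈ ((J ∆ N) ∆ N), b i = ∑ i ∈ J, b i := by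
        rw [symmDiff_symmDiff_cancel_right]
      obtain ⟨h1, h2⟩ := hJ.2
      have := hsum (J ∆ N)
      rw [hJs] at this
      refine ⟨mem_univ _, ?_, ?_⟩ <;> simp only [hy] at h1 h2 <;> linarith [this]
    · intro I _; exact symmDiff_symmDiff_cancel_right N I
    · intro J _; exact symmDiff_symmDiff_cancel_right N J
  rw [hcard]
  -- the antichain pieces
  set G : ℕ → Finset (Finset (Fin n)) :=
    fun t => F.filter (fun J => (∑ i ∈ J, b i) ∈ Set.Ioc (y + t) (y + t + 1)) with hG
  have hanti : ∀ t : ℕ, IsAntichain (· ⊆ ·) ((G t : Set (Finset (Fin n)))) := by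
    intro t A hA B hB hne hAB
    rw [Finset.mem_coe, hG, Finset.mem_filter] at hA hB
    obtain ⟨-, hA1, hA2⟩ := hA
    obtain ⟨-, hB1, hB2⟩ := hB
    have hss : A ⊂ B := HasSubset.Subset.ssubset_of_ne hAB hne
    obtain ⟨i, hiB, hiA⟩ := Finset.exists_of_ssubset hss
    have hi : i ∈ B \ A := Finset.mem_sdiff.mpr ⟨hiB, hiA⟩
    have h1 : (1 : ℝ) ≤ ∑ j ∈ B \ A, b j := by
      refine (hb1 i).trans (Finset.single_le_sum (fun j _ => ?_) hi)
      exact (zero_le_one.trans (hb1 j))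
    have h2 : ∑ j ∈ B \ A, b j + ∑ j ∈ A, b j = ∑ j ∈ B, b j :=
      Finset.sum_sdiff hAB
    linarith
  have hWsub : ∀ t, G t ⊆ F := fun t => Finset.filter_subset _ _
  -- LYM for each piece
  have hlym : ∀ t : ℕ,
      (∑ r ∈ range (n + 1), (((G t) # r).card : ℚ) / (n.choose r)) ≤ 1 := by
    intro t
    have := Finset.sum_card_slice_div_choose_le_one (𝕜 := ℚ) (hanti t)
    simpa using this
  -- covering
  have hcover : ∀ r : ℕ, ((F # r).card : ℚ) ≤ ∑ t ∈ range d, (((G t) # r).card : ℚ) := by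
    intro r
    have hsub : F # r ⊆ (range d).biUnion (fun t => (G t) # r) := by
      intro J hJ
      rw [Finset.mem_slice] at hJ
      obtain ⟨hJF, hJr⟩ := hJ
      have hJy : (∑ i ∈ J, b i) ∈ Set.Ioo y (y + d) := by
        rw [hF, Finset.mem_filter] at hJF; exact hJF.2
      obtain ⟨hz1, hz2⟩ := hJy
      set z : ℝ := (∑ i ∈ J, b i) - y with hz
      have hz1' : 0 < z := by simp [hz]; linarith
      have hz2' : z < d := by simp [hz]; linarith
      have hc1 : z ≤ (⌈z⌉ : ℝ) := Int.le_ceil z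
      have hc2 : (⌈z⌉ : ℝ) < z + 1 := Int.ceil_lt_add_one z
      have hcpos : 1 ≤ ⌈z⌉ := by
        by_contra h
        push_neg at h
        have : (⌈z⌉ : ℝ) ≤ 0 := by exact_mod_cast Int.lt_add_one_iff.mp h
        linarith
      have hcd : ⌈z⌉ ≤ (d : ℤ) := Int.ceil_le.mpr (by exact_mod_cast hz2'.le)
      refine Finset.mem_biUnion.mpr ⟨(⌈z⌉ - 1).toNat, ?_, ?_⟩
      · rw [Finset.mem_range]; omega
      · rw [Finset.mem_slice]
        refine ⟨Finset.mem_filter.mpr ⟨hJF, ?_, ?_⟩, hJr⟩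
        · have : (((⌈z⌉ - 1).toNat : ℤ) : ℝ) = (⌈z⌉ : ℝ) - 1 := by
            push_cast [Int.toNat_of_nonneg (by omega : (0:ℤ) ≤ ⌈z⌉ - 1)]
            ring
          push_cast at this ⊢
          rw [this]
          linarith
        · have : (((⌈z⌉ - 1).toNat : ℤ) : ℝ) = (⌈z⌉ : ℝ) - 1 := by
            push_cast [Int.toNat_of_nonneg (by omega : (0:ℤ) ≤ ⌈z⌉ - 1)]
            ring
          push_cast at this ⊢
          rw [this]
          linarith
    calc ((F # r).card : ℚ) ≤ (((range d).biUnion (fun t => (G t) # r)).card : ℚ) := by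
          exact_mod_cast Finset.card_le_card hsub
      _ ≤ ∑ t ∈ range d, (((G t) # r).card : ℚ) := by
          exact_mod_cast Finset.card_biUnion_le
  -- total LYM
  have hLYM : (∑ r ∈ range (n + 1), ((F # r).card : ℚ) / (n.choose r)) ≤ d := by
    calc (∑ r ∈ range (n + 1), ((F # r).card : ℚ) / (n.choose r))
        ≤ ∑ r ∈ range (n + 1), (∑ t ∈ range d, (((G t) # r).card : ℚ)) / (n.choose r) := by
          refine Finset.sum_le_sum fun r hr => ?_
          have hcr : (0 : ℚ) < (n.choose r : ℚ) := by
            exact_mod_cast Nat.choose_pos (by rw [mem_range] at hr; omega)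
          exact div_le_div_of_nonneg_right (hcover r) hcr.le
      _ = ∑ t ∈ range d, ∑ r ∈ range (n + 1), (((G t) # r).card : ℚ) / (n.choose r) := by
          rw [Finset.sum_comm]
          refine Finset.sum_congr rfl fun r _ => ?_
          rw [Finset.sum_div]
      _ ≤ ∑ t ∈ range d, 1 := Finset.sum_le_sum fun t _ => hlym t
      _ = d := by simp
  -- window
  set q : ℕ := (n - d + 1) / 2 with hq
  have h2q : 2 * q ≤ n := by omega
  have hqd : n ≤ 2 * q + d := by omega
  have hqn : q + d ≤ n + 1 := by omega
  have hW : (range (n + 1)).filter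
      (fun j : ℕ => (n : ℤ) - d ≤ 2 * (j : ℤ) ∧ 2 * (j : ℤ) < (n : ℤ) + d) = Ico q (q + d) := by
    ext j
    simp only [Finset.mem_filter, Finset.mem_range, Finset.mem_Ico]
    omega
  have hRHS : (∑ j ∈ Finset.range (n + 1),
      if (n : ℤ) - d ≤ 2 * j ∧ 2 * (j : ℤ) < (n : ℤ) + d then n.choose j else 0)
      = ∑ j ∈ Ico q (q + d), n.choose j := by
    rw [← Finset.sum_filter, hW]
  rw [hRHS]
  -- now the LP argument in ℚ
  have hcardF : F.card = ∑ r ∈ range (n + 1), (F # r).card := by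
    have : (Iic (Fintype.card (Fin n))) = range (n + 1) := by
      ext j; simp [Nat.lt_succ_iff]
    rw [← Finset.sum_card_slice F, this]
  have hslice_le : ∀ r, r ≤ n → (F # r).card ≤ n.choose r := by
    intro r hr
    have : F # r ⊆ Finset.powersetCard r (univ : Finset (Fin n)) := by
      intro A hA
      rw [Finset.mem_slice] at hA
      exact Finset.mem_powersetCard.mpr ⟨Finset.subset_univ _, hA.2⟩
    calc (F # r).card ≤ _ := Finset.card_le_card this
      _ = n.choose r := by rw [Finset.card_powersetCard]; simp
  set m : ℚ := (n.choose q : ℚ) with hm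
  have hmpos : (0 : ℚ) < m := by
    rw [hm]; exact_mod_cast Nat.choose_pos (by omega)
  have hsubW : Ico q (q + d) ⊆ range (n + 1) := by
    intro j hj
    rw [Finset.mem_Ico] at hj
    rw [Finset.mem_range]
    omega
  have hkey : ∑ r ∈ range (n + 1) \ Ico q (q + d), ((F # r).card : ℚ)
      ≤ ∑ r ∈ Ico q (q + d), ((n.choose r : ℚ) - (F # r).card) := by
    have hsplit : ∑ r ∈ range (n + 1) \ Ico q (q + d), ((F # r).card : ℚ) / (n.choose r)
        + ∑ r ∈ Ico q (q + d), ((F # r).card : ℚ) / (n.choose r)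
        = ∑ r ∈ range (n + 1), ((F # r).card : ℚ) / (n.choose r) :=
      Finset.sum_sdiff hsubW
    have hd' : (d : ℚ) = ∑ r ∈ Ico q (q + d), (1 : ℚ) := by
      rw [Finset.sum_const, Nat.card_Ico]
      simp
    have step1 : ∑ r ∈ range (n + 1) \ Ico q (q + d), ((F # r).card : ℚ) / (n.choose r)
        ≤ ∑ r ∈ Ico q (q + d), ((n.choose r : ℚ) - (F # r).card) / (n.choose r) := by
      have := hLYM
      rw [← hsplit] at this
      have h2 : ∑ r ∈ Ico q (q + d), ((n.choose r : ℚ) - (F # r).card) / (n.choose r)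
          = ∑ r ∈ Ico q (q + d), ((1 : ℚ) - ((F # r).card : ℚ) / (n.choose r)) := by
        refine Finset.sum_congr rfl fun r hr => ?_
        have hrn : r ≤ n := by have := hsubW hr; rw [mem_range] at this; omega
        have hcr : (0 : ℚ) < (n.choose r : ℚ) := by
          exact_mod_cast Nat.choose_pos hrn
        field_simp
      rw [h2, Finset.sum_sub_distrib, ← hd']
      linarith
    -- now compare termwise with m
    have left_le : ∑ r ∈ range (n + 1) \ Ico q (q + d), ((F # r).card : ℚ) / m
        ≤ ∑ r ∈ range (n + 1) \ Ico q (q + d), ((F # r).card : ℚ) / (n.choose r) := by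
      refine Finset.sum_le_sum fun r hr => ?_
      rw [Finset.mem_sdiff, Finset.mem_range, Finset.mem_Ico] at hr
      have hrn : r ≤ n := by omega
      have hout : r < q ∨ q + d ≤ r := by omega
      have hle : (n.choose r : ℚ) ≤ m := by
        rw [hm]; exact_mod_cast choose_le_of_outside h2q hqd hrn hout
      have hcr : (0 : ℚ) < (n.choose r : ℚ) := by
        exact_mod_cast Nat.choose_pos hrn
      exact div_le_div_of_nonneg_left (Nat.cast_nonneg _) hcr hle
    have right_le : ∑ r ∈ Ico q (q + d), ((n.choose r : ℚ) - (F # r).card) / (n.choose r)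
        ≤ ∑ r ∈ Ico q (q + d), ((n.choose r : ℚ) - (F # r).card) / m := by
      refine Finset.sum_le_sum fun r hr => ?_
      rw [Finset.mem_Ico] at hr
      have hrn : r ≤ n := by omega
      have hge : m ≤ (n.choose r : ℚ) := by
        rw [hm]
        have : n.choose q ≤ n.choose r := by
          rcases le_or_gt (2 * r) n with h | h
          · exact choose_mono_half n q r (by omega) (by omega)
          · rw [← Nat.choose_symm hrn]
            exact choose_mono_half n q (n - r) (by omega) (by omega)
        exact_mod_cast this
      have hnum : (0 : ℚ) ≤ (n.choose r : ℚ) - (F # r).card := by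
        have := hslice_le r hrn
        have : ((F # r).card : ℚ) ≤ (n.choose r : ℚ) := by exact_mod_cast this
        linarith
      exact div_le_div_of_nonneg_left hnum hmpos hge
    have hchain : ∑ r ∈ range (n + 1) \ Ico q (q + d), ((F # r).card : ℚ) / m
        ≤ ∑ r ∈ Ico q (q + d), ((n.choose r : ℚ) - (F # r).card) / m :=
      left_le.trans (step1.trans right_le)
    rw [← Finset.sum_div, ← Finset.sum_div, div_le_div_iff_of_pos_right hmpos] at hchain
    exact hchain
  -- conclude
  have final : (F.card : ℚ) ≤ ∑ j ∈ Ico q (q + d), (n.choose j : ℚ) := by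
    have hsplit2 : ∑ r ∈ range (n + 1) \ Ico q (q + d), ((F # r).card : ℚ)
        + ∑ r ∈ Ico q (q + d), ((F # r).card : ℚ)
        = ∑ r ∈ range (n + 1), ((F # r).card : ℚ) :=
      Finset.sum_sdiff hsubW
    have : (F.card : ℚ) = ∑ r ∈ range (n + 1), ((F # r).card : ℚ) := by
      rw [hcardF]; push_cast; ring
    rw [this, ← hsplit2]
    have := hkey
    rw [Finset.sum_sub_distrib] at this
    linarith
  exact_mod_cast final
end

section
/- For every n ≥ 0 and q ≥ 1 and any units a_1, ..., a_n in Z/qZ, there exists a partition of the power set of [n] into C(n, ⌊n/2⌋)_q blocks such that within each block, the subset sums ∑_{i∈I} a_i (mod q) are pairwise distinct. -/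
/-!
Induct on the ground set, keeping a partition of its power set into sum-distinct blocks in which,
for `1 ≤ j ≤ q`, the number of blocks of size at least `j` is `C(n, ⌊(n + 1 - j) / 2⌋)_q`; for
`j = 1` this is the total number of blocks, `C(n, ⌊n / 2⌋)_q`. Adding a new element `x` doubles
each block `b` to `b ∪ {I ∪ {x} | I ∈ b}`. Since `a x` generates `ℤ/qℤ`, a block with fewer than `q` sets
contains some `I` with `∑ I + a x` not a sum of the block, and moving `I ∪ {x}` across splits the
doubled block into sum-distinct blocks of sizes `|b| + 1` and `|b| - 1`; a block of size `q`
splits into two blocks of size `q`. The counts then follow Pascal's rule `C(n + 1, s)_q =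
C(n, s)_q + C(n, s - 1)_q`, the boundary cases `j = 1` and `j = q` coming from the symmetry
`C(n, s)_q = C(n, n - s)_q` and the `q`-periodicity in `s`.
-/

open Finset

lemma modBinom_eq_sum (n q : ℕ) (s : ℤ) :
    modBinom n q s = ∑ j ∈ range (n + 1), if s ≡ j [ZMOD q] then n.choose j else 0 := by
  simp only [modBinom, Int.modEq_iff_dvd, Int.dvd_iff_emod_eq_zero]

lemma modBinom_congr {n q : ℕ} {s t : ℤ} (h : s ≡ t [ZMOD q]) :
    modBinom n q s = modBinom n q t := by
  simp only [modBinom_eq_sum]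
  exact sum_congr rfl fun j _ => if_congr ⟨h.symm.trans, h.trans⟩ rfl rfl

lemma modBinom_sub_self (n q : ℕ) (s : ℤ) : modBinom n q (n - s) = modBinom n q s := by
  rw [modBinom_eq_sum, modBinom_eq_sum, ← sum_range_reflect]
  refine sum_congr rfl fun j hj => ?_
  have hjn : j ≤ n := Nat.lt_succ_iff.1 (mem_range.1 hj)
  rw [Nat.add_sub_cancel, Nat.choose_symm hjn, Nat.cast_sub hjn]
  refine if_congr ?_ rfl rfl
  simp only [Int.modEq_iff_dvd]
  rw [← dvd_neg]
  ring_nf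

lemma modBinom_eq_of_add_modEq {n q : ℕ} {s t : ℤ} (h : s + t ≡ n [ZMOD q]) :
    modBinom n q s = modBinom n q t := by
  rw [← modBinom_sub_self n q t]
  exact modBinom_congr (by simpa using h.sub_right t)

def centralModBinom (n q j : ℕ) : ℕ :=
  modBinom n q (((n : ℤ) + 1 - j) / 2)

lemma centralModBinom_one (n q : ℕ) : centralModBinom n q 1 = modBinom n q (n / 2 : ℕ) := by
  unfold centralModBinom
  congr 1
  omega

lemma centralModBinom_zero (n q : ℕ) : centralModBinom n q 0 = centralModBinom n q 1 :=
  modBinom_eq_of_add_modEq <| by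
    rw [show ((n : ℤ) + 1 - (0 : ℕ)) / 2 + ((n : ℤ) + 1 - (1 : ℕ)) / 2 = n by omega]

lemma centralModBinom_succ_self (n q : ℕ) :
    centralModBinom n q (q + 1) = centralModBinom n q q :=
  modBinom_eq_of_add_modEq <| by
    rw [show ((n : ℤ) + 1 - (q + 1 : ℕ)) / 2 + ((n : ℤ) + 1 - q) / 2 = n - q by omega,
      Int.modEq_iff_dvd]
    simp

lemma centralModBinom_succ (n q j : ℕ) :
    centralModBinom (n + 1) q (j + 1) = centralModBinom n q j + centralModBinom n q (j + 2) := by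
  unfold centralModBinom
  rw [modBinom_succ]
  congr 2 <;> omega

lemma centralModBinom_zero_left {q j : ℕ} (hj : 1 ≤ j) (hjq : j ≤ q) :
    centralModBinom 0 q j = if j = 1 then 1 else 0 := by
  simp only [centralModBinom, modBinom_eq_sum, zero_add, sum_range_one, Nat.choose_self,
    Nat.cast_zero]
  refine if_congr ⟨fun h => ?_, fun h => by subst h; rfl⟩ rfl rfl
  have := Int.eq_zero_of_abs_lt_dvd (Int.modEq_iff_dvd.1 h.symm) (by rw [abs_lt]; omega)
  omega

lemma ZMod.exists_add_notMem_of_card_lt {q : ℕ} [NeZero q] {S : Finset (ZMod q)}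
    (hS : S.Nonempty) (hcard : #S < q) {u : ZMod q} (hu : IsUnit u) : ∃ t ∈ S, t + u ∉ S := by
  by_contra! hclosed
  obtain ⟨t, ht⟩ := hS
  have hmul : ∀ k : ℕ, t + k * u ∈ S := by
    intro k
    induction k with
    | zero => simpa using ht
    | succ k ih => simpa [add_mul, ← add_assoc] using hclosed _ ih
  have huniv : S = univ := eq_univ_of_forall fun z => by
    obtain ⟨v, rfl⟩ := hu
    simpa [mul_assoc] using hmul ((z - t) * ↑v⁻¹).val
  rw [huniv, card_univ, ZMod.card] at hcard
  exact lt_irrefl q hcard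

lemma Finpartition.exists_parts_subset_pair {α : Type*} [DecidableEq α] {c₁ c₂ : Finset α}
    (h : Disjoint c₁ c₂) :
    ∃ Q : Finpartition (c₁ ∪ c₂), Q.parts ⊆ {c₁, c₂} ∧ ∀ j, 1 ≤ j →
      #{c ∈ Q.parts | j ≤ #c} = (if j ≤ #c₁ then 1 else 0) + (if j ≤ #c₂ then 1 else 0) := by
  have hpw : (({c₁, c₂} : Finset (Finset α)) : Set (Finset α)).PairwiseDisjoint id := by
    rw [coe_pair]
    exact Set.pairwise_pair.2 fun _ => ⟨h, h.symm⟩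
  refine ⟨(ofPairwiseDisjoint _ hpw).copy (by simp), erase_subset _ _, fun j hj => ?_⟩
  rw [card_filter, copy_parts, sum_ofPairwiseDisjoint_eq_sum hpw (by simp; omega)]
  by_cases hc : c₁ = c₂
  · subst hc
    obtain rfl := disjoint_self.1 h
    rw [pair_eq_singleton, sum_singleton, if_neg (by simp; omega)]
  · exact sum_pair hc

section InsertImage

variable {ι : Type*} [DecidableEq ι] {x : ι} {b T : Finset (Finset ι)}

lemma injOn_insert (hx : ∀ I ∈ b, x ∉ I) :
    Set.InjOn (insert x) (b : Set (Finset ι)) := fun I hI J hJ h => by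
  rw [← erase_insert (hx I hI), h, erase_insert (hx J hJ)]

lemma mem_union_image_insert_iff (hx : ∀ I ∈ b, x ∉ I)
    {J : Finset ι} : J ∈ b ∪ b.image (insert x) ↔ J.erase x ∈ b := by
  constructor
  · intro hJ
    rcases mem_union.1 hJ with hJ | hJ
    · rwa [erase_eq_of_notMem (hx J hJ)]
    · obtain ⟨I, hI, rfl⟩ := mem_image.1 hJ
      rwa [erase_insert (hx I hI)]
  · intro hJ
    by_cases hxJ : x ∈ J
    · exact mem_union_right _ (mem_image.2 ⟨_, hJ, insert_erase hxJ⟩)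
    · rw [erase_eq_of_notMem hxJ] at hJ
      exact mem_union_left _ hJ

lemma disjoint_image_insert (hx : ∀ I ∈ b, x ∉ I)
    (T : Finset (Finset ι)) : Disjoint b (T.image (insert x)) :=
  disjoint_left.2 fun I hI hIT => by
    obtain ⟨J, -, rfl⟩ := mem_image.1 hIT
    exact hx _ hI (mem_insert_self x J)

variable {M : Type*} [AddCommGroup M] {a : ι → M}

lemma injOn_sum_image_insert (hx : ∀ I ∈ b, x ∉ I)
    (hb : Set.InjOn (fun I => ∑ i ∈ I, a i) b) :
    Set.InjOn (fun I => ∑ i ∈ I, a i) (b.image (insert x) : Set (Finset ι)) := by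
  rw [coe_image]
  rintro _ ⟨I, hI, rfl⟩ _ ⟨J, hJ, rfl⟩ h
  simp only [sum_insert (hx I hI), sum_insert (hx J hJ)] at h
  rw [hb hI hJ (add_left_cancel h)]

lemma injOn_sum_union_image_insert (hx : ∀ I ∈ b, x ∉ I)
    (hb : Set.InjOn (fun I => ∑ i ∈ I, a i) b) (hT : T ⊆ b)
    (hTb : ∀ I ∈ T, ∀ J ∈ b, ∑ i ∈ J, a i ≠ a x + ∑ i ∈ I, a i) :
    Set.InjOn (fun I => ∑ i ∈ I, a i) ((b ∪ T.image (insert x) : Finset _) : Set (Finset ι)) := by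
  rw [coe_union, Set.injOn_union (disjoint_coe.2 (disjoint_image_insert hx T))]
  refine ⟨hb, injOn_sum_image_insert (fun I hI => hx I (hT hI)) (hb.mono hT), ?_⟩
  rintro J hJ _ hIx h
  obtain ⟨I, hI, rfl⟩ := mem_image.1 hIx
  exact hTb I hI J hJ (by rwa [← sum_insert (hx I (hT hI))])

end InsertImage

section Structures

variable {ι : Type*} [DecidableEq ι] {q : ℕ} [NeZero q] {a : ι → ZMod q}

lemma exists_finpartition_union_image_insert {x : ι} {b : Finset (Finset ι)}
    (hu : IsUnit (a x)) (hx : ∀ I ∈ b, x ∉ I) (hb : Set.InjOn (fun I => ∑ i ∈ I, a i) b)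
    (hne : b.Nonempty) :
    ∃ Q : Finpartition (b ∪ b.image (insert x)),
      (∀ c ∈ Q.parts, Set.InjOn (fun I => ∑ i ∈ I, a i) c) ∧ ∀ j, 1 ≤ j → j ≤ q →
        #{c ∈ Q.parts | j ≤ #c} =
          (if j ≤ #b + 1 then 1 else 0) + (if min (j + 1) q ≤ #b then 1 else 0) := by
  have hbq : #b ≤ q := by
    simpa using card_le_card_of_injOn _ (fun _ _ => mem_univ _) hb
  obtain ⟨T, hTb, hTcard, hTsum⟩ : ∃ T ⊆ b, #T = (if #b < q then 1 else 0) ∧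
      ∀ I ∈ T, ∀ J ∈ b, ∑ i ∈ J, a i ≠ a x + ∑ i ∈ I, a i := by
    split_ifs with hlt
    · obtain ⟨t, ht, htu⟩ := ZMod.exists_add_notMem_of_card_lt (hne.image _)
        (card_image_le.trans_lt hlt) hu
      obtain ⟨I, hI, rfl⟩ := mem_image.1 ht
      refine ⟨{I}, singleton_subset_iff.2 hI, card_singleton I, fun I' hI' J hJ hJI => ?_⟩
      rw [mem_singleton.1 hI', add_comm] at hJI
      exact htu (mem_image.2 ⟨J, hJ, hJI⟩)
    · exact ⟨∅, empty_subset _, rfl, by simp⟩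
  have hinsert := injOn_insert hx
  set c₁ := b ∪ T.image (insert x)
  set c₂ := (b \ T).image (insert x)
  have hc₁ : #c₁ = #b + #T := by
    rw [card_union_of_disjoint (disjoint_image_insert hx T),
      card_image_of_injOn (hinsert.mono hTb)]
  have hc₂ : #c₂ = #b - #T := by
    rw [card_image_of_injOn (hinsert.mono sdiff_subset), card_sdiff_of_subset hTb]
  have hdisj : Disjoint c₁ c₂ := by
    refine disjoint_union_left.2 ⟨disjoint_image_insert hx _, disjoint_left.2 ?_⟩
    rintro _ hIx hJx
    obtain ⟨I, hI, rfl⟩ := mem_image.1 hIx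
    obtain ⟨J, hJ, hJI⟩ := mem_image.1 hJx
    rw [hinsert (sdiff_subset hJ) (hTb hI) hJI] at hJ
    exact (mem_sdiff.1 hJ).2 hI
  have hunion : c₁ ∪ c₂ = b ∪ b.image (insert x) := by
    rw [union_assoc, ← image_union, union_sdiff_of_subset hTb]
  obtain ⟨Q, hQ, hQcount⟩ := Finpartition.exists_parts_subset_pair hdisj
  refine ⟨Q.copy hunion, fun c hc => ?_, fun j hj hjq => ?_⟩
  · obtain rfl | rfl : c = c₁ ∨ c = c₂ := by simpa using hQ hc
    · exact injOn_sum_union_image_insert hx hb hTb hTsum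
    · exact injOn_sum_image_insert (fun I hI => hx I (sdiff_subset hI)) (hb.mono sdiff_subset)
  · rw [Finpartition.copy_parts, hQcount j hj, hc₁, hc₂, hTcard]
    split_ifs <;> omega

lemma exists_finpartition_powerset_insert {s : Finset ι} {x : ι} (hxs : x ∉ s)
    (hu : IsUnit (a x)) (P : Finpartition s.powerset)
    (hP : ∀ b ∈ P.parts, Set.InjOn (fun I => ∑ i ∈ I, a i) b) :
    ∃ P' : Finpartition (insert x s).powerset,
      (∀ c ∈ P'.parts, Set.InjOn (fun I => ∑ i ∈ I, a i) c) ∧ ∀ j, 1 ≤ j → j ≤ q →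
        #{c ∈ P'.parts | j ≤ #c} =
          #{b ∈ P.parts | j ≤ #b + 1} + #{b ∈ P.parts | min (j + 1) q ≤ #b} := by
  have hx : ∀ b ∈ P.parts, ∀ I ∈ b, x ∉ I := fun b hb I hI hxI =>
    hxs (mem_powerset.1 (P.subset hb hI) hxI)
  choose Q hQ hQcount using fun b (hb : b ∈ P.parts) =>
    exists_finpartition_union_image_insert hu (hx b hb) (hP b hb) (P.nonempty_of_mem_parts hb)
  let D : P.parts → Finset (Finset ι) := fun b => b.1 ∪ b.1.image (insert x)
  have hmemD : ∀ b J, J ∈ D b ↔ J.erase x ∈ b.1 := fun b _ =>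
    mem_union_image_insert_iff (hx b.1 b.2)
  have hindep : P.parts.attach.SupIndep D := by
    rw [supIndep_iff_pairwiseDisjoint]
    rintro (b : P.parts) - (b' : P.parts) - hbb'
    simp only [Function.onFun, disjoint_left, hmemD]
    exact fun J hJ hJ' => hbb' (Subtype.ext (P.eq_of_mem_parts b.2 b'.2 hJ hJ'))
  have hsup : P.parts.attach.sup D = (insert x s).powerset := by
    ext J
    simp only [mem_sup, hmemD, mem_powerset, subset_insert_iff, mem_attach, true_and]
    constructor
    · rintro ⟨b, hb⟩
      exact mem_powerset.1 (P.subset b.2 hb)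
    · intro hJ
      obtain ⟨b, hb, hJb⟩ := P.exists_mem (mem_powerset.2 hJ)
      exact ⟨⟨b, hb⟩, hJb⟩
  refine ⟨(Finpartition.combine (fun b : P.parts => Q b.1 b.2) hindep).copy hsup, fun c hc => ?_,
    fun j hj hjq => ?_⟩
  · obtain ⟨b, -, hcb⟩ := mem_biUnion.1 hc
    exact hQ b.1 b.2 c hcb
  · simp only [card_filter, Finpartition.copy_parts, Finpartition.sum_combine]
    rw [← sum_attach P.parts, ← sum_attach P.parts, ← sum_add_distrib]
    refine sum_congr rfl fun b _ => ?_
    rw [← card_filter, hQcount b.1 b.2 j hj hjq]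

theorem exists_finpartition_powerset (s : Finset ι) (ha : ∀ i ∈ s, IsUnit (a i)) :
    ∃ P : Finpartition s.powerset, (∀ b ∈ P.parts, Set.InjOn (fun I => ∑ i ∈ I, a i) b) ∧
      ∀ j, 1 ≤ j → j ≤ q → #{b ∈ P.parts | j ≤ #b} = centralModBinom #s q j := by
  induction s using Finset.induction_on with
  | empty =>
    refine ⟨Finpartition.indiscrete (by simp), fun b hb => ?_, fun j hj hjq => ?_⟩
    · rw [mem_singleton.1 hb, powerset_empty, coe_singleton]
      exact Set.injOn_singleton _ _
    · rw [card_empty, centralModBinom_zero_left hj hjq]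
      change #{b ∈ {(∅ : Finset ι).powerset} | j ≤ #b} = _
      rw [powerset_empty, filter_singleton, card_singleton]
      split_ifs <;> simp <;> omega
  | insert x s hxs ih =>
    obtain ⟨P, hP, hcount⟩ := ih fun i hi => ha i (mem_insert_of_mem hi)
    obtain ⟨P', hP', hcount'⟩ :=
      exists_finpartition_powerset_insert hxs (ha x (mem_insert_self x s)) P hP
    refine ⟨P', hP', fun j hj hjq => ?_⟩
    have hlow : #{b ∈ P.parts | j ≤ #b + 1} = centralModBinom #s q (j - 1) := by
      rcases Nat.lt_or_ge j 2 with hj2 | hj2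
      · obtain rfl : j = 1 := by omega
        rw [Nat.sub_self, centralModBinom_zero, ← hcount 1 le_rfl hjq]
        exact congr_arg card (filter_congr fun b hb =>
          iff_of_true (by omega) (card_pos.2 (P.nonempty_of_mem_parts hb)))
      · rw [← hcount (j - 1) (by omega) (by omega)]
        exact congr_arg card (filter_congr fun b _ => by omega)
    have hhigh : #{b ∈ P.parts | min (j + 1) q ≤ #b} = centralModBinom #s q (j + 1) := by
      rcases hjq.lt_or_eq with hlt | rfl
      · rw [min_eq_left hlt, hcount (j + 1) (by omega) hlt]
      · rw [min_eq_right (Nat.le_succ j), hcount j hj le_rfl, centralModBinom_succ_self]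
    obtain ⟨k, rfl⟩ : ∃ k, j = k + 1 := ⟨j - 1, by omega⟩
    rw [hcount' _ hj hjq, hlow, hhigh, card_insert_of_notMem hxs, centralModBinom_succ]
    rfl

end Structures

lemma Finpartition.exists_surjective_fin {α β : Type*} [Fintype α] [DecidableEq α]
    (P : Finpartition (univ : Finset α)) {g : α → β} (hg : ∀ b ∈ P.parts, Set.InjOn g b) :
    ∃ f : α → Fin #P.parts, Function.Surjective f ∧ ∀ x y, f x = f y → g x = g y → x = y := by
  let e := P.parts.equivFin
  refine ⟨fun x => e ⟨P.part x, P.part_mem.2 (mem_univ x)⟩, fun k => ?_, fun x y hxy hg' => ?_⟩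
  · obtain ⟨y, hy⟩ := P.nonempty_of_mem_parts (e.symm k).2
    refine ⟨y, ?_⟩
    simp only [P.part_eq_of_mem (e.symm k).2 hy, Subtype.coe_eta, Equiv.apply_symm_apply]
  · have hpart : P.part x = P.part y := congr_arg Subtype.val (e.injective hxy)
    have hx := P.mem_part_self.2 (mem_univ x)
    have hy := P.mem_part_self.2 (mem_univ y)
    rw [← hpart] at hy
    exact hg _ (P.part_mem.2 (mem_univ x)) hx hy hg'

theorem structure_partition (n q : ℕ) [NeZero q] (a : Fin n → ZMod q)
    (ha : ∀ i, IsUnit (a i)) :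
    ∃ f : Finset (Fin n) → Fin (modBinom n q (n / 2 : ℕ)),
      Function.Surjective f ∧
        ∀ I J : Finset (Fin n), f I = f J →
          (∑ i ∈ I, a i) = (∑ i ∈ J, a i) → I = J := by
  obtain ⟨P, hP, hcount⟩ := exists_finpartition_powerset univ fun i _ => ha i
  have hcard : #P.parts = modBinom n q (n / 2 : ℕ) := by
    have h1 := hcount 1 le_rfl NeZero.one_le
    rw [card_univ, Fintype.card_fin, centralModBinom_one] at h1
    rw [← h1]
    exact congr_arg card
      (filter_true_of_mem fun b hb => card_pos.2 (P.nonempty_of_mem_parts hb)).symm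
  obtain ⟨f, hf, hfinj⟩ := (P.copy powerset_univ).exists_surjective_fin hP
  exact ⟨finCongr hcard ∘ f, (finCongr hcard).surjective.comp hf,
    fun I J hIJ => hfinj I J ((finCongr hcard).injective hIJ)⟩
end

section
/- Let q ≥ 1 and n ≥ 0 with a_i = 1 for all i. There exists a partition of the power set of [n] into structures (families with distinct subset sums mod q) such that the sum set of each structure is either all of Z/qZ or equals the image mod q of an integer interval {x, x+1, ..., y} with x + y = n (centered about n/2). -/
open Finset

private lemma cast_notMem (q : ℕ) [NeZero q] {u v t : ℤ} (h1 : t - u < q) (h2 : v < t) :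
    (t : ZMod q) ∉ (Finset.Icc u v).image (fun j : ℤ => (j : ZMod q)) := by
  intro hmem
  obtain ⟨j, hj, hjt⟩ := Finset.mem_image.mp hmem
  rw [Finset.mem_Icc] at hj
  have hdvd : (q : ℤ) ∣ t - j := by
    have h0 : ((t - j : ℤ) : ZMod q) = 0 := by push_cast; rw [hjt]; ring
    exact (ZMod.intCast_zmod_eq_zero_iff_dvd _ _).mp h0
  have := Int.le_of_dvd (by omega) hdvd
  omega

private lemma icc_cast_univ (q : ℕ) [NeZero q] {x y : ℤ} (h : (q : ℤ) ≤ y - x + 1) :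
    (Finset.Icc x y).image (fun j : ℤ => (j : ZMod q)) = Finset.univ := by
  apply Finset.eq_univ_of_forall
  intro z
  rw [Finset.mem_image]
  have hv : (z - (x : ZMod q)).val < q := ZMod.val_lt _
  refine ⟨x + ((z - (x : ZMod q)).val : ℤ), Finset.mem_Icc.mpr ⟨by omega, by omega⟩, ?_⟩
  push_cast
  rw [ZMod.natCast_rightInverse (z - (x : ZMod q))]
  ring

private lemma image_cast_shift (q : ℕ) [NeZero q] (u v : ℤ) :
    ((Finset.Icc u v).image (fun j : ℤ => (j : ZMod q))).image (· + 1) =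
      (Finset.Icc (u + 1) (v + 1)).image (fun j : ℤ => (j : ZMod q)) := by
  rw [Finset.image_image, ← Finset.image_add_right_Icc u v 1, Finset.image_image]
  apply Finset.image_congr
  intro j _
  simp only [Function.comp]
  push_cast
  ring

private lemma image_erase_of_inj {γ β : Type*} [DecidableEq γ] [DecidableEq β]
    (f : γ → β) (A : Finset γ)
    (hd : ∀ I ∈ A, ∀ J ∈ A, f I = f J → I = J) (J : γ) (hJ : J ∈ A) :
    (A.erase J).image f = (A.image f).erase (f J) := by
  ext z
  simp only [Finset.mem_image, Finset.mem_erase]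
  constructor
  · rintro ⟨I, ⟨hIJ, hIA⟩, rfl⟩
    exact ⟨fun h => hIJ (hd I hIA J hJ h), I, hIA, rfl⟩
  · rintro ⟨hz, I, hIA, rfl⟩
    exact ⟨I, ⟨fun h => hz (by rw [h]), hIA⟩, rfl⟩

private lemma image_insert_card {α : Type*} [DecidableEq α] (q : ℕ) [NeZero q]
    (a : α) (A : Finset (Finset α)) (ha : ∀ I ∈ A, a ∉ I) :
    ((A.image (insert a)).image fun I => (I.card : ZMod q)) =
      (A.image fun I => (I.card : ZMod q)).image (· + 1) := by
  rw [Finset.image_image, Finset.image_image]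
  apply Finset.image_congr
  intro I hI
  simp only [Function.comp]
  rw [Finset.card_insert_of_notMem (ha I hI)]
  push_cast
  ring

private lemma main_partition {α : Type*} [DecidableEq α] (q : ℕ) [NeZero q] (s : Finset α) :
    ∃ PP : Finset (Finset (Finset α)),
      (∀ A ∈ PP, ∀ I ∈ A, I ⊆ s) ∧
      (∀ I : Finset α, I ⊆ s → ∃! A, A ∈ PP ∧ I ∈ A) ∧
      (∀ A ∈ PP,
        (∀ I ∈ A, ∀ J ∈ A, (I.card : ZMod q) = (J.card : ZMod q) → I = J) ∧
        ((A.image fun I => (I.card : ZMod q)) = Finset.univ ∨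
          ∃ x y : ℤ, x ≤ y ∧ y - x + 1 ≤ (q : ℤ) ∧ x + y = (s.card : ℤ) ∧
            (A.image fun I => (I.card : ZMod q)) =
              (Finset.Icc x y).image (fun j : ℤ => (j : ZMod q)))) := by
  classical
  induction s using Finset.induction_on with
  | empty =>
    refine ⟨{{∅}}, ?_, ?_, ?_⟩
    · intro A hA I hI
      rw [Finset.mem_singleton] at hA
      subst hA
      rw [Finset.mem_singleton] at hI
      subst hI
      exact Finset.Subset.refl _
    · intro I hI
      have hIe : I = ∅ := Finset.subset_empty.mp hI
      subst hIe
      refine ⟨{∅}, ⟨Finset.mem_singleton_self _, Finset.mem_singleton_self _⟩, ?_⟩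
      rintro A ⟨hA, _⟩
      exact Finset.mem_singleton.mp hA
    · intro A hA
      rw [Finset.mem_singleton] at hA
      subst hA
      constructor
      · intro I hI J hJ _
        rw [Finset.mem_singleton] at hI hJ
        rw [hI, hJ]
      · right
        have hq : 1 ≤ (q : ℤ) := by have := NeZero.pos q; omega
        refine ⟨0, 0, le_refl _, by omega, by simp, ?_⟩
        simp
  | @insert a s ha ih =>
    obtain ⟨PP, hsub, huniq, hinv⟩ := ih
    have hcard : ((insert a s).card : ℤ) = (s.card : ℤ) + 1 := by
      rw [Finset.card_insert_of_notMem ha]; push_cast; ring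
    have pieces : ∀ A, ∃ B : Finset (Finset (Finset α)), A ∈ PP →
        (∀ C ∈ B, ∀ I ∈ C, I.erase a ∈ A ∧ I ⊆ insert a s) ∧
        (∀ I : Finset α, I ⊆ insert a s → I.erase a ∈ A → ∃! C, C ∈ B ∧ I ∈ C) ∧
        (∀ C ∈ B,
          (∀ I ∈ C, ∀ J ∈ C, (I.card : ZMod q) = (J.card : ZMod q) → I = J) ∧
          ((C.image fun I => (I.card : ZMod q)) = Finset.univ ∨
            ∃ x y : ℤ, x ≤ y ∧ y - x + 1 ≤ (q : ℤ) ∧ x + y = ((insert a s).card : ℤ) ∧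
              (C.image fun I => (I.card : ZMod q)) =
                (Finset.Icc x y).image (fun j : ℤ => (j : ZMod q)))) := by
      intro A
      by_cases hA : A ∈ PP
      swap
      · exact ⟨∅, fun h => absurd h hA⟩
      have hAs : ∀ I ∈ A, I ⊆ s := hsub A hA
      have hAa : ∀ I ∈ A, a ∉ I := fun I hI hai => ha (hAs I hI hai)
      obtain ⟨hd, himg⟩ := hinv A hA
      have key : (A.image fun I => (I.card : ZMod q)) = Finset.univ ∨
          ∃ x y : ℤ, x ≤ y ∧ y - x + 1 < (q : ℤ) ∧ x + y = (s.card : ℤ) ∧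
            (A.image fun I => (I.card : ZMod q)) =
              (Finset.Icc x y).image (fun j : ℤ => (j : ZMod q)) := by
        rcases himg with h | ⟨x, y, hxy, hlen, hsum, him⟩
        · exact Or.inl h
        rcases lt_or_eq_of_le hlen with h | h
        · exact Or.inr ⟨x, y, hxy, h, hsum, him⟩
        · exact Or.inl (him.trans (icc_cast_univ q (by omega)))
      clear himg
      rcases key with huniv | ⟨x, y, hxy, hlen, hsum, him⟩
      · -- universal case
        refine ⟨{A, A.image (insert a)}, fun _ => ⟨?_, ?_, ?_⟩⟩
        · intro C hC I hI
          rcases Finset.mem_insert.mp hC with rfl | hC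
          · rw [Finset.erase_eq_of_notMem (hAa I hI)]
            exact ⟨hI, (hAs I hI).trans (Finset.subset_insert a s)⟩
          · rw [Finset.mem_singleton] at hC
            subst hC
            obtain ⟨I₀, hI₀, rfl⟩ := Finset.mem_image.mp hI
            rw [Finset.erase_insert (hAa I₀ hI₀)]
            exact ⟨hI₀, Finset.insert_subset_insert a (hAs I₀ hI₀)⟩
        · intro I hIs hIA
          by_cases haI : a ∈ I
          · refine ⟨A.image (insert a),
              ⟨Finset.mem_insert_of_mem (Finset.mem_singleton_self _),
               Finset.mem_image.mpr ⟨I.erase a, hIA, Finset.insert_erase haI⟩⟩, ?_⟩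
            rintro C ⟨hC, hIC⟩
            rcases Finset.mem_insert.mp hC with rfl | hC
            · exact absurd haI (hAa I hIC)
            · exact Finset.mem_singleton.mp hC
          · have hI : I ∈ A := by rwa [Finset.erase_eq_of_notMem haI] at hIA
            refine ⟨A, ⟨Finset.mem_insert_self _ _, hI⟩, ?_⟩
            rintro C ⟨hC, hIC⟩
            rcases Finset.mem_insert.mp hC with rfl | hC
            · rfl
            · rw [Finset.mem_singleton] at hC
              subst hC
              obtain ⟨I₀, _, rfl⟩ := Finset.mem_image.mp hIC
              exact absurd (Finset.mem_insert_self a I₀) haI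
        · intro C hC
          rcases Finset.mem_insert.mp hC with rfl | hC
          · exact ⟨hd, Or.inl huniv⟩
          · rw [Finset.mem_singleton] at hC
            subst hC
            constructor
            · intro I hI K hK h
              obtain ⟨I₀, hI₀, rfl⟩ := Finset.mem_image.mp hI
              obtain ⟨K₀, hK₀, rfl⟩ := Finset.mem_image.mp hK
              rw [Finset.card_insert_of_notMem (hAa I₀ hI₀),
                Finset.card_insert_of_notMem (hAa K₀ hK₀)] at h
              push_cast at h
              have h' : ((I₀.card : ZMod q)) = (K₀.card : ZMod q) := by
                have := add_right_cancel h
                exact_mod_cast this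
              rw [hd I₀ hI₀ K₀ hK₀ h']
            · left
              rw [image_insert_card q a A hAa, huniv]
              apply Finset.eq_univ_of_forall
              intro z
              exact Finset.mem_image.mpr ⟨z - 1, Finset.mem_univ _, by ring⟩
      · -- interval case
        have hyA : ((y : ℤ) : ZMod q) ∈ A.image fun I => (I.card : ZMod q) := by
          rw [him]
          exact Finset.mem_image_of_mem _ (Finset.mem_Icc.mpr ⟨hxy, le_refl y⟩)
        obtain ⟨J, hJA, hfJ⟩ := Finset.mem_image.mp hyA
        have haJ : a ∉ J := hAa J hJA
        have hfaJ : (((insert a J).card : ℕ) : ZMod q) = ((y + 1 : ℤ) : ZMod q) := by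
          rw [Finset.card_insert_of_notMem haJ]
          push_cast
          rw [hfJ]
        have hfresh : ((y + 1 : ℤ) : ZMod q) ∉ A.image fun I => (I.card : ZMod q) := by
          rw [him]
          exact cast_notMem q (by omega) (by omega)
        have hB1d : ∀ I ∈ insert (insert a J) A, ∀ K ∈ insert (insert a J) A,
            (I.card : ZMod q) = (K.card : ZMod q) → I = K := by
          intro I hI K hK h
          rcases Finset.mem_insert.mp hI with rfl | hI <;>
            rcases Finset.mem_insert.mp hK with rfl | hK
          · rfl
          · exfalso
            apply hfresh
            rw [← hfaJ, h]
            exact Finset.mem_image_of_mem _ hK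
          · exfalso
            apply hfresh
            rw [← hfaJ, ← h]
            exact Finset.mem_image_of_mem _ hI
          · exact hd I hI K hK h
        have hB1img : ((insert (insert a J) A).image fun I => (I.card : ZMod q)) =
            (Finset.Icc x (y + 1)).image (fun j : ℤ => (j : ZMod q)) := by
          rw [Finset.image_insert, him, hfaJ]
          have hicc : Finset.Icc x (y + 1) = insert (y + 1) (Finset.Icc x y) := by
            ext j
            simp only [Finset.mem_Icc, Finset.mem_insert]
            omega
          rw [hicc, Finset.image_insert]
        have hB1inv : (∀ I ∈ insert (insert a J) A, ∀ K ∈ insert (insert a J) A,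
              (I.card : ZMod q) = (K.card : ZMod q) → I = K) ∧
            (((insert (insert a J) A).image fun I => (I.card : ZMod q)) = Finset.univ ∨
              ∃ x' y' : ℤ, x' ≤ y' ∧ y' - x' + 1 ≤ (q : ℤ) ∧
                x' + y' = ((insert a s).card : ℤ) ∧
                ((insert (insert a J) A).image fun I => (I.card : ZMod q)) =
                  (Finset.Icc x' y').image (fun j : ℤ => (j : ZMod q))) :=
          ⟨hB1d, Or.inr ⟨x, y + 1, by omega, by omega, by rw [hcard]; omega, hB1img⟩⟩
        have hB1cov : ∀ I ∈ insert (insert a J) A, I.erase a ∈ A ∧ I ⊆ insert a s := by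
          intro I hI
          rcases Finset.mem_insert.mp hI with rfl | hI
          · rw [Finset.erase_insert haJ]
            exact ⟨hJA, Finset.insert_subset_insert a (hAs J hJA)⟩
          · rw [Finset.erase_eq_of_notMem (hAa I hI)]
            exact ⟨hI, (hAs I hI).trans (Finset.subset_insert a s)⟩
        by_cases hEe : A.erase J = ∅
        · -- A = {J}
          refine ⟨{insert (insert a J) A}, fun _ => ⟨?_, ?_, ?_⟩⟩
          · intro C hC
            rw [Finset.mem_singleton] at hC
            subst hC
            exact hB1cov
          · intro I hIs hIA
            refine ⟨insert (insert a J) A, ⟨Finset.mem_singleton_self _, ?_⟩, ?_⟩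
            · by_cases haI : a ∈ I
              · have hIJ : I.erase a = J := by
                  by_contra hne
                  exact (Finset.notMem_empty _) (hEe ▸ Finset.mem_erase.mpr ⟨hne, hIA⟩)
                have : I = insert a J := by rw [← Finset.insert_erase haI, hIJ]
                rw [this]
                exact Finset.mem_insert_self _ _
              · have : I ∈ A := by rwa [Finset.erase_eq_of_notMem haI] at hIA
                exact Finset.mem_insert_of_mem this
            · rintro C ⟨hC, _⟩
              exact Finset.mem_singleton.mp hC
          · intro C hC
            rw [Finset.mem_singleton] at hC
            subst hC
            exact hB1inv
        · -- A.erase J nonempty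
          have hne : (A.erase J).Nonempty := Finset.nonempty_iff_ne_empty.mpr hEe
          have hxly : x < y := by
            obtain ⟨I, hI⟩ := hne
            have hIA' : I ∈ A := Finset.mem_of_mem_erase hI
            have hIJ : I ≠ J := Finset.ne_of_mem_erase hI
            have hfI : ((I.card : ℕ) : ZMod q) ∈
                (Finset.Icc x y).image (fun j : ℤ => (j : ZMod q)) := by
              rw [← him]
              exact Finset.mem_image_of_mem _ hIA'
            obtain ⟨j, hj, hjI⟩ := Finset.mem_image.mp hfI
            have hjy : j ≠ y := by
              intro h
              apply hIJ
              apply hd I hIA' J hJA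
              rw [← hjI, h, hfJ]
            rw [Finset.mem_Icc] at hj
            omega
          have hB2d : ∀ I ∈ (A.erase J).image (insert a), ∀ K ∈ (A.erase J).image (insert a),
              (I.card : ZMod q) = (K.card : ZMod q) → I = K := by
            intro I hI K hK h
            obtain ⟨I₀, hI₀, rfl⟩ := Finset.mem_image.mp hI
            obtain ⟨K₀, hK₀, rfl⟩ := Finset.mem_image.mp hK
            have hI₀A := Finset.mem_of_mem_erase hI₀
            have hK₀A := Finset.mem_of_mem_erase hK₀
            rw [Finset.card_insert_of_notMem (hAa I₀ hI₀A),
              Finset.card_insert_of_notMem (hAa K₀ hK₀A)] at h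
            push_cast at h
            have h' : ((I₀.card : ZMod q)) = (K₀.card : ZMod q) := by
              have := add_right_cancel h
              exact_mod_cast this
            rw [hd I₀ hI₀A K₀ hK₀A h']
          have hB2img : (((A.erase J).image (insert a)).image fun I => (I.card : ZMod q)) =
              (Finset.Icc (x + 1) y).image (fun j : ℤ => (j : ZMod q)) := by
            rw [image_insert_card q a (A.erase J) (fun I hI => hAa I (Finset.mem_of_mem_erase hI)),
              image_erase_of_inj _ A hd J hJA, him, hfJ]
            have hicc : Finset.Icc x y = insert y (Finset.Icc x (y - 1)) := by
              ext j
              simp only [Finset.mem_Icc, Finset.mem_insert]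
              omega
            rw [hicc, Finset.image_insert,
              Finset.erase_insert (cast_notMem q (by omega) (by omega)),
              image_cast_shift]
            norm_num
          have hB2inv : (∀ I ∈ (A.erase J).image (insert a), ∀ K ∈ (A.erase J).image (insert a),
                (I.card : ZMod q) = (K.card : ZMod q) → I = K) ∧
              ((((A.erase J).image (insert a)).image fun I => (I.card : ZMod q)) = Finset.univ ∨
                ∃ x' y' : ℤ, x' ≤ y' ∧ y' - x' + 1 ≤ (q : ℤ) ∧
                  x' + y' = ((insert a s).card : ℤ) ∧
                  (((A.erase J).image (insert a)).image fun I => (I.card : ZMod q)) =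
                    (Finset.Icc x' y').image (fun j : ℤ => (j : ZMod q))) :=
            ⟨hB2d, Or.inr ⟨x + 1, y, by omega, by omega, by rw [hcard]; omega, hB2img⟩⟩
          refine ⟨{insert (insert a J) A, (A.erase J).image (insert a)}, fun _ => ⟨?_, ?_, ?_⟩⟩
          · intro C hC
            rcases Finset.mem_insert.mp hC with rfl | hC
            · exact hB1cov
            · rw [Finset.mem_singleton] at hC
              subst hC
              intro I hI
              obtain ⟨I₀, hI₀, rfl⟩ := Finset.mem_image.mp hI
              have hI₀A := Finset.mem_of_mem_erase hI₀
              rw [Finset.erase_insert (hAa I₀ hI₀A)]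
              exact ⟨hI₀A, Finset.insert_subset_insert a (hAs I₀ hI₀A)⟩
          · intro I hIs hIA
            by_cases haI : a ∈ I
            · by_cases hIJ : I.erase a = J
              · have hIeq : I = insert a J := by rw [← Finset.insert_erase haI, hIJ]
                refine ⟨insert (insert a J) A, ⟨Finset.mem_insert_self _ _,
                  by rw [hIeq]; exact Finset.mem_insert_self _ _⟩, ?_⟩
                rintro C ⟨hC, hIC⟩
                rcases Finset.mem_insert.mp hC with rfl | hC
                · rfl
                · rw [Finset.mem_singleton] at hC
                  subst hC
                  obtain ⟨K₀, hK₀, hKe⟩ := Finset.mem_image.mp hIC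
                  exfalso
                  apply Finset.ne_of_mem_erase hK₀
                  have : K₀ = I.erase a := by
                    rw [← hKe, Finset.erase_insert (hAa K₀ (Finset.mem_of_mem_erase hK₀))]
                  rw [this, hIJ]
              · have hImem : I.erase a ∈ A.erase J := Finset.mem_erase.mpr ⟨hIJ, hIA⟩
                refine ⟨(A.erase J).image (insert a),
                  ⟨Finset.mem_insert_of_mem (Finset.mem_singleton_self _),
                   Finset.mem_image.mpr ⟨_, hImem, Finset.insert_erase haI⟩⟩, ?_⟩
                rintro C ⟨hC, hIC⟩
                rcases Finset.mem_insert.mp hC with rfl | hC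
                · exfalso
                  rcases Finset.mem_insert.mp hIC with rfl | hIC
                  · exact hIJ (Finset.erase_insert haJ)
                  · exact (hAa I hIC) haI
                · exact Finset.mem_singleton.mp hC
            · have hI : I ∈ A := by rwa [Finset.erase_eq_of_notMem haI] at hIA
              refine ⟨insert (insert a J) A,
                ⟨Finset.mem_insert_self _ _, Finset.mem_insert_of_mem hI⟩, ?_⟩
              rintro C ⟨hC, hIC⟩
              rcases Finset.mem_insert.mp hC with rfl | hC
              · rfl
              · rw [Finset.mem_singleton] at hC
                subst hC
                obtain ⟨I₀, _, rfl⟩ := Finset.mem_image.mp hIC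
                exact absurd (Finset.mem_insert_self a I₀) haI
          · intro C hC
            rcases Finset.mem_insert.mp hC with rfl | hC
            · exact hB1inv
            · rw [Finset.mem_singleton] at hC
              subst hC
              exact hB2inv
    choose g hg using pieces
    refine ⟨PP.biUnion g, ?_, ?_, ?_⟩
    · intro A' hA' I hI
      obtain ⟨A, hA, hC⟩ := Finset.mem_biUnion.mp hA'
      exact ((hg A hA).1 A' hC I hI).2
    · intro I hIs
      have hIe : I.erase a ⊆ s := by
        intro x hx
        obtain ⟨hxa, hxI⟩ := Finset.mem_erase.mp hx
        rcases Finset.mem_insert.mp (hIs hxI) with h | h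
        · exact absurd h hxa
        · exact h
      obtain ⟨A, ⟨hA, hIA⟩, hAuniq⟩ := huniq _ hIe
      obtain ⟨C, ⟨hC, hIC⟩, hCuniq⟩ := (hg A hA).2.1 I hIs hIA
      refine ⟨C, ⟨Finset.mem_biUnion.mpr ⟨A, hA, hC⟩, hIC⟩, ?_⟩
      rintro C' ⟨hC', hIC'⟩
      obtain ⟨A₂, hA₂, hC₂⟩ := Finset.mem_biUnion.mp hC'
      have hIA₂ : I.erase a ∈ A₂ := ((hg A₂ hA₂).1 C' hC₂ I hIC').1
      have hAeq : A₂ = A := hAuniq A₂ ⟨hA₂, hIA₂⟩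
      subst hAeq
      exact hCuniq C' ⟨hC₂, hIC'⟩
    · intro A' hA'
      obtain ⟨A, hA, hC⟩ := Finset.mem_biUnion.mp hA'
      exact (hg A hA).2.2 A' hC

theorem symmetric_structure_partition (n q : ℕ) [NeZero q] :
    ∃ PP : Finset (Finset (Finset (Fin n))),
      (∀ I : Finset (Fin n), ∃! A, A ∈ PP ∧ I ∈ A) ∧
      ∀ A ∈ PP,
        (∀ I ∈ A, ∀ J ∈ A, (I.card : ZMod q) = (J.card : ZMod q) → I = J) ∧
        ((A.image fun I => (I.card : ZMod q)) = Finset.univ ∨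
          ∃ x y : ℤ, x + y = (n : ℤ) ∧
            (A.image fun I => (I.card : ZMod q)) =
              (Finset.Icc x y).image (fun j : ℤ => (j : ZMod q))) := by
  classical
  obtain ⟨PP, hsub, huniq, hinv⟩ := main_partition q (Finset.univ : Finset (Fin n))
  refine ⟨PP, fun I => huniq I (Finset.subset_univ I), fun A hA => ?_⟩
  obtain ⟨hd, himg⟩ := hinv A hA
  refine ⟨hd, ?_⟩
  rcases himg with h | ⟨x, y, _, _, hsum, him⟩
  · exact Or.inl h
  · refine Or.inr ⟨x, y, ?_, him⟩
    rwa [Finset.card_univ, Fintype.card_fin] at hsum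
end
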